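/- arXiv:2004.04826 — 5 statements merged into one kernel-verified Lean document; each statement's English description precedes it below -/
import Mathlib

section
/- There exists Θ > 0 such that for every θ ∈ [−Θ, Θ], the moment generating function E[exp(θ·N^(−α)·Σ_{i=1}^N q̄_i)] is finite. -/
open MeasureTheory ProbabilityTheory Filter

/-- Steady-state JSQ load-balancing model at size `N` with parameters
`α, amax, smax, σa2, σs2`, on a probability space `(Ω, μ)`. -/
structure JSQModel (N : ℕ) (α amax smax σa2 σs2 : ℝ)
    (Ω : Type) [MeasurableSpace Ω] (μ : Measure Ω) where
  hα : 0 < α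
  hamax : 0 < amax
  hsmax : 0 < smax
  hσa2 : 0 ≤ σa2
  hσs2 : 0 ≤ σs2
  hprob : IsProbabilityMeasure μ
  /-- stationary queue lengths -/
  q : Ω → Fin N → ℕ
  /-- number of arrivals -/
  a : Ω → ℕ
  /-- potential services -/
  s : Ω → Fin N → ℕ
  /-- index of a shortest queue (JSQ routing) -/
  I : Ω → Fin N
  meas_q : Measurable q
  meas_a : Measurable a
  meas_s : Measurable s
  meas_I : Measurable I
  a_bdd : ∀ᵐ ω ∂μ, (a ω : ℝ) ≤ amax
  a_mean : ∫ ω, (a ω : ℝ) ∂μ = N * (1 - (N : ℝ) ^ (-α))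
  a_var : variance (fun ω => (a ω : ℝ)) μ = N * σa2
  s_bdd : ∀ i, ∀ᵐ ω ∂μ, (s ω i : ℝ) ≤ smax
  s_mean : ∀ i, ∫ ω, (s ω i : ℝ) ∂μ = 1
  s_var : ∀ i, variance (fun ω => (s ω i : ℝ)) μ = σs2
  s_indep : iIndepFun (fun i ω => s ω i) μ
  s_ident : ∀ i j, IdentDistrib (fun ω => s ω i) (fun ω => s ω j) μ μ
  I_min : ∀ᵐ ω ∂μ, q ω (I ω) = ⨅ j, q ω j
  indep_as_qI : IndepFun (fun ω => (a ω, s ω)) (fun ω => (q ω, I ω)) μ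
  indep_a_s : IndepFun a s μ
  /-- the next-step queue-length vector has the same distribution as `q` -/
  stationary :
    IdentDistrib (fun ω i => q ω i + (if i = I ω then a ω else 0) - s ω i) q μ μ

namespace JSQModel

variable {N : ℕ} {α amax smax σa2 σs2 : ℝ} {Ω : Type} [MeasurableSpace Ω]
  {μ : Measure Ω}

/-- routed arrivals -/
def atilde (M : JSQModel N α amax smax σa2 σs2 Ω μ) (ω : Ω) (i : Fin N) : ℕ :=
  if i = M.I ω then M.a ω else 0

/-- unused services -/
def u (M : JSQModel N α amax smax σa2 σs2 Ω μ) (ω : Ω) (i : Fin N) : ℕ :=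
  M.s ω i - (M.q ω i + M.atilde ω i)

/-- next-step queue lengths -/
def qplus (M : JSQModel N α amax smax σa2 σs2 Ω μ) (ω : Ω) (i : Fin N) : ℕ :=
  M.q ω i + M.atilde ω i - M.s ω i

end JSQModel

/-- The exponential law on `[0, ∞)` with the given rate, i.e. the measure on `ℝ`
with density `rate · exp(−rate·x)` on `[0, ∞)` with respect to Lebesgue measure. -/
noncomputable def expLaw (rate : ℝ) : Measure ℝ :=
  MeasureTheory.volume.withDensity fun x =>
    ENNReal.ofReal (if 0 ≤ x then rate * Real.exp (-(rate * x)) else 0)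

/-!
With `V_θ(q) = ∑ᵢ exp(θ qᵢ)`, one step of the dynamics multiplies `exp(θ qᵢ)` by roughly
`exp(-θ sᵢ)` and the shortest queue additionally by `exp(θ a)`. Since JSQ sends the arrivals
to a queue with `exp(θ q_I) ≤ V_θ(q) / N`, independence of `(a, s)` from `q` gives the drift bound
`E[V_θ(q⁺) | q] ≤ (1 - θ N^(-α) + O(θ²)) V_θ(q) + N`. Stationarity makes the drift of the bounded
function `min(V_θ, K)` vanish, so `E[V_θ(q); V_θ(q) < K] ≤ 2N / (θ N^(-α))` for every `K`, and
monotone convergence gives `E[V_θ(q)] < ∞`. Finally `exp(θ/N · ∑ᵢ qᵢ) ≤ maxᵢ exp(θ qᵢ) ≤ V_θ(q)`.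
-/

open Finset Topology

lemma min_sub_min_le_ite {x y K : ℝ} : min y K - min x K ≤ if x < K then y - x else 0 := by
  split_ifs with h
  · rw [min_eq_left h.le]; linarith [min_le_left y K]
  · rw [min_eq_right (not_lt.1 h)]; linarith [min_le_right y K]

lemma exp_mul_natCast_tsub_le {θ : ℝ} (hθ : 0 ≤ θ) (m k n : ℕ) :
    Real.exp (θ * ↑(m + k - n)) ≤
      Real.exp (θ * m) * Real.exp (-(θ * n)) + Real.exp (θ * m) * (Real.exp (θ * k) - 1) + 1 := by
  have hm := Real.exp_pos (θ * m)
  have hn := Real.exp_pos (-(θ * n))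
  have hk : 1 ≤ Real.exp (θ * k) := Real.one_le_exp (by positivity)
  have hn1 : Real.exp (-(θ * n)) ≤ 1 := Real.exp_le_one_iff.2 (by simp; positivity)
  rcases le_total (m + k) n with h | h
  · rw [Nat.sub_eq_zero_of_le h, Nat.cast_zero, mul_zero, Real.exp_zero]
    nlinarith
  · rw [Nat.cast_sub h, Nat.cast_add,
      show θ * (m + k - n) = θ * m + θ * k + -(θ * n) by ring, Real.exp_add, Real.exp_add]
    nlinarith [mul_nonneg (mul_nonneg hm.le (sub_nonneg.2 hk)) (sub_nonneg.2 hn1)]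

noncomputable def expLyapunov {N : ℕ} (θ : ℝ) (v : Fin N → ℕ) : ℝ :=
  ∑ i, Real.exp (θ * v i)

lemma expLyapunov_nonneg {N : ℕ} (θ : ℝ) (v : Fin N → ℕ) : 0 ≤ expLyapunov θ v :=
  sum_nonneg fun _ _ => (Real.exp_pos _).le

lemma exp_le_expLyapunov {N : ℕ} (θ : ℝ) (v : Fin N → ℕ) (j : Fin N) :
    Real.exp (θ * v j) ≤ expLyapunov θ v :=
  single_le_sum (f := fun i => Real.exp (θ * v i)) (fun _ _ => (Real.exp_pos _).le) (mem_univ j)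

lemma exp_mul_sum_le_one_add_expLyapunov {N : ℕ} {θ t : ℝ} (ht : t * N ≤ θ)
    (v : Fin N → ℕ) : Real.exp (t * ∑ i, (v i : ℝ)) ≤ 1 + expLyapunov θ v := by
  have hV := expLyapunov_nonneg θ v
  rcases le_or_gt t 0 with ht0 | ht0
  · have : t * ∑ i, (v i : ℝ) ≤ 0 :=
      mul_nonpos_of_nonpos_of_nonneg ht0 (sum_nonneg fun _ _ => Nat.cast_nonneg _)
    linarith [Real.exp_le_one_iff.2 this]
  rcases Nat.eq_zero_or_pos N with rfl | hN
  · simp [expLyapunov]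
  have : Nonempty (Fin N) := ⟨⟨0, hN⟩⟩
  obtain ⟨j, hj⟩ := Finite.exists_max v
  have hsum : ∑ i, (v i : ℝ) ≤ N * v j := by
    simpa using sum_le_card_nsmul univ (fun i => (v i : ℝ)) (v j) fun i _ => by exact_mod_cast hj i
  calc Real.exp (t * ∑ i, (v i : ℝ)) ≤ Real.exp (θ * v j) := Real.exp_le_exp.2 <| by
        calc t * ∑ i, (v i : ℝ) ≤ t * (N * v j) := by gcongr
          _ = t * N * v j := by ring
          _ ≤ θ * v j := by gcongr
    _ ≤ 1 + expLyapunov θ v := by linarith [exp_le_expLyapunov θ v j]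

lemma expLyapunov_jsq_step_le {N : ℕ} {θ : ℝ} (hθ : 0 ≤ θ) (q s : Fin N → ℕ) (a : ℕ)
    (I : Fin N) (hI : ∀ j, q I ≤ q j) :
    expLyapunov θ (fun i => q i + (if i = I then a else 0) - s i) ≤
      expLyapunov θ q + ∑ i, Real.exp (θ * q i) * (Real.exp (-(θ * s i)) - 1)
        + expLyapunov θ q / N * (Real.exp (θ * a) - 1) + N := by
  have hN : (0 : ℝ) < N := Nat.cast_pos.2 I.pos
  have hmin : Real.exp (θ * q I) ≤ expLyapunov θ q / N := by
    rw [le_div_iff₀ hN, mul_comm]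
    simpa [expLyapunov] using card_nsmul_le_sum univ (fun i => Real.exp (θ * q i)) _
      fun j _ => Real.exp_le_exp.2 (mul_le_mul_of_nonneg_left (by exact_mod_cast hI j) hθ)
  have ha : 0 ≤ Real.exp (θ * a) - 1 := sub_nonneg.2 (Real.one_le_exp (by positivity))
  have harrival : ∑ i, Real.exp (θ * q i) * (Real.exp (θ * ↑(if i = I then a else 0)) - 1) =
      Real.exp (θ * q I) * (Real.exp (θ * a) - 1) := by
    rw [sum_eq_single I (fun i _ hi => by simp [hi]) (by simp)]
    simp
  calc expLyapunov θ (fun i => q i + (if i = I then a else 0) - s i)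
      ≤ ∑ i, (Real.exp (θ * q i) * Real.exp (-(θ * s i))
          + Real.exp (θ * q i) * (Real.exp (θ * ↑(if i = I then a else 0)) - 1) + 1) :=
        sum_le_sum fun i _ => exp_mul_natCast_tsub_le hθ _ _ _
    _ = expLyapunov θ q + ∑ i, Real.exp (θ * q i) * (Real.exp (-(θ * s i)) - 1)
          + Real.exp (θ * q I) * (Real.exp (θ * a) - 1) + N := by
        rw [sum_add_distrib, sum_add_distrib, harrival]
        simp only [expLyapunov, mul_sub, mul_one, sum_sub_distrib, sum_const, card_univ,
          Fintype.card_fin, nsmul_eq_mul]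
        ring
    _ ≤ _ := by gcongr

section Probability

variable {Ω : Type*} [MeasurableSpace Ω] {μ : Measure Ω}

lemma integrable_comp_of_countable [IsFiniteMeasure μ] {E : Type*} [MeasurableSpace E]
    [Countable E] [MeasurableSingletonClass E]
    {X : Ω → E} (hX : Measurable X) (g : E → ℝ) (C : ℝ) (hC : ∀ᵐ ω ∂μ, |g (X ω)| ≤ C) :
    Integrable (fun ω => g (X ω)) μ :=
  .of_bound ((measurable_of_countable g).comp hX).aestronglyMeasurable C hC

lemma integral_exp_mul_sub_one_le [IsProbabilityMeasure μ] {X : Ω → ℝ} {b t : ℝ}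
    (hX : AEStronglyMeasurable X μ) (h0 : ∀ᵐ ω ∂μ, 0 ≤ X ω) (hb : ∀ᵐ ω ∂μ, X ω ≤ b)
    (ht : |t| * b ≤ 1) :
    ∫ ω, (Real.exp (t * X ω) - 1) ∂μ ≤ t * ∫ ω, X ω ∂μ + t ^ 2 * b ^ 2 := by
  have htX : ∀ᵐ ω ∂μ, |t * X ω| ≤ 1 := by
    filter_upwards [h0, hb] with ω h0 hb
    rw [abs_mul, abs_of_nonneg h0]
    exact (mul_le_mul_of_nonneg_left hb (abs_nonneg t)).trans ht
  have hXint : Integrable X μ :=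
    .of_bound hX b (by filter_upwards [h0, hb] with ω h0 hb; rwa [Real.norm_of_nonneg h0])
  have hexp : Integrable (fun ω => Real.exp (t * X ω) - 1) μ := by
    refine .of_bound ((Real.continuous_exp.comp_aestronglyMeasurable (hX.const_mul t)).sub
      aestronglyMeasurable_const) (Real.exp 1 + 1) ?_
    filter_upwards [htX] with ω h
    have := Real.exp_le_exp.2 (abs_le.1 h).2
    rw [Real.norm_eq_abs, abs_le]
    constructor <;> linarith [Real.exp_pos (t * X ω)]
  calc ∫ ω, (Real.exp (t * X ω) - 1) ∂μ ≤ ∫ ω, (t * X ω + t ^ 2 * b ^ 2) ∂μ := by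
        refine integral_mono_ae hexp ((hXint.const_mul t).add (integrable_const _)) ?_
        filter_upwards [htX, h0, hb] with ω h h0 hb
        have hquad := (abs_le.1 (Real.abs_exp_sub_one_sub_id_le h)).2
        have : (t * X ω) ^ 2 ≤ t ^ 2 * b ^ 2 := by rw [mul_pow]; gcongr
        linarith
    _ = t * ∫ ω, X ω ∂μ + t ^ 2 * b ^ 2 := by
        rw [integral_add (hXint.const_mul t) (integrable_const _), integral_const_mul,
          integral_const, probReal_univ, one_smul]

lemma integral_ite_lt_sub_nonneg_of_identDistrib [IsFiniteMeasure μ] {E : Type*}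
    [MeasurableSpace E] {X Y : Ω → E} (h : IdentDistrib Y X μ μ) {V : E → ℝ}
    (hV : Measurable V) (hV0 : ∀ x, 0 ≤ V x) (K : ℝ)
    (hint : Integrable (fun ω => if V (X ω) < K then V (Y ω) - V (X ω) else 0) μ) :
    0 ≤ ∫ ω, (if V (X ω) < K then V (Y ω) - V (X ω) else 0) ∂μ := by
  have hmin : IdentDistrib (fun ω => min (V (Y ω)) K) (fun ω => min (V (X ω)) K) μ μ :=
    h.comp (hV.min measurable_const)
  have hbound : ∀ Z : Ω → E, AEMeasurable Z μ → Integrable (fun ω => min (V (Z ω)) K) μ :=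
    fun Z hZ => .of_bound ((hV.min measurable_const).comp_aemeasurable hZ).aestronglyMeasurable
      |K| (ae_of_all _ fun ω => by
        rw [Real.norm_eq_abs, abs_le]
        constructor
        · exact le_min (by linarith [hV0 (Z ω), abs_nonneg K]) (neg_abs_le K)
        · exact (min_le_right _ _).trans (le_abs_self K))
  have hY := hbound Y h.aemeasurable_fst
  have hX := hbound X h.aemeasurable_snd
  calc (0 : ℝ) = ∫ ω, min (V (Y ω)) K ∂μ - ∫ ω, min (V (X ω)) K ∂μ := by
        rw [hmin.integral_eq, sub_self]
    _ = ∫ ω, (min (V (Y ω)) K - min (V (X ω)) K) ∂μ := (integral_sub hY hX).symm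
    _ ≤ _ := integral_mono (hY.sub hX) hint fun ω => min_sub_min_le_ite

lemma integrable_of_integral_ite_lt_le [IsFiniteMeasure μ] {f : Ω → ℝ} (hf : Measurable f)
    (h0 : ∀ ω, 0 ≤ f ω) {C : ℝ} (hC : ∀ n : ℕ, ∫ ω, (if f ω < n then f ω else 0) ∂μ ≤ C) :
    Integrable f μ := by
  set g : ℕ → Ω → ℝ := fun n ω => if f ω < n then f ω else 0
  have hg : ∀ n, Measurable (g n) := fun n =>
    Measurable.ite (measurableSet_lt hf measurable_const) hf measurable_const
  have hg0 : ∀ n ω, 0 ≤ g n ω := fun n ω => by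
    simp only [g]; split_ifs <;> simp [h0 ω]
  have hgint : ∀ n, Integrable (g n) μ := fun n =>
    .of_bound (hg n).aestronglyMeasurable n (ae_of_all _ fun ω => by
      simp only [g, Real.norm_eq_abs]; split_ifs with h
      · rw [abs_of_nonneg (h0 ω)]; exact h.le
      · simp)
  have hmono : ∀ ω, Monotone fun n => ENNReal.ofReal (g n ω) := fun ω n m hnm => by
    refine ENNReal.ofReal_le_ofReal ?_
    simp only [g]
    split_ifs with hn hm hm
    · rfl
    · exact absurd (hn.trans_le (by exact_mod_cast hnm)) hm
    · exact h0 ω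
    · rfl
  have hlim : ∀ ω, Tendsto (fun n => ENNReal.ofReal (g n ω)) atTop (𝓝 (ENNReal.ofReal (f ω))) :=
    fun ω => tendsto_const_nhds.congr' <| by
      obtain ⟨n, hn⟩ := exists_nat_gt (f ω)
      filter_upwards [eventually_ge_atTop n] with m hm
      rw [show g m ω = f ω from if_pos (hn.trans_le (by exact_mod_cast hm))]
  refine ⟨hf.aestronglyMeasurable, ?_⟩
  rw [hasFiniteIntegral_iff_ofReal (ae_of_all _ h0)]
  calc ∫⁻ ω, ENNReal.ofReal (f ω) ∂μ ≤ ENNReal.ofReal C :=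
        le_of_tendsto' (lintegral_tendsto_of_tendsto_of_monotone
          (fun n => (hg n).ennreal_ofReal.aemeasurable) (ae_of_all _ hmono) (ae_of_all _ hlim))
          fun n => by
            rw [← ofReal_integral_eq_lintegral_ofReal (hgint n) (ae_of_all _ (hg0 n))]
            exact ENNReal.ofReal_le_ofReal (hC n)
    _ < ⊤ := ENNReal.ofReal_lt_top

end Probability

namespace JSQModel

variable {N : ℕ} {α amax smax σa2 σs2 : ℝ} {Ω : Type} [MeasurableSpace Ω] {μ : Measure Ω}

lemma N_pos (M : JSQModel N α amax smax σa2 σs2 Ω μ) : 0 < N := by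
  have := M.hprob
  obtain ⟨ω⟩ := nonempty_of_isProbabilityMeasure μ
  exact (M.I ω).pos

variable (M : JSQModel N α amax smax σa2 σs2 Ω μ) {θ : ℝ}

lemma integral_mul_eq_of_indep {ψ : (Fin N → ℕ) → ℝ} {φ : ℕ × (Fin N → ℕ) → ℝ}
    (hψ : Integrable (fun ω => ψ (M.q ω)) μ) (hφ : Integrable (fun ω => φ (M.a ω, M.s ω)) μ) :
    Integrable (fun ω => ψ (M.q ω) * φ (M.a ω, M.s ω)) μ ∧
      ∫ ω, ψ (M.q ω) * φ (M.a ω, M.s ω) ∂μ =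
        (∫ ω, ψ (M.q ω) ∂μ) * ∫ ω, φ (M.a ω, M.s ω) ∂μ := by
  have h : IndepFun (fun ω => ψ (M.q ω)) (fun ω => φ (M.a ω, M.s ω)) μ :=
    (M.indep_as_qI.comp (measurable_of_countable φ)
      (measurable_of_countable fun p : (Fin N → ℕ) × Fin N => ψ p.1)).symm
  exact ⟨h.integrable_mul hψ hφ, h.integral_mul_eq_mul_integral hψ.1 hφ.1⟩

lemma integrable_exp_q_trunc (θ K : ℝ) (i : Fin N) :
    Integrable (fun ω => if expLyapunov θ (M.q ω) < K then Real.exp (θ * M.q ω i) else 0) μ :=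
  have := M.hprob
  integrable_comp_of_countable M.meas_q
    (fun v => if expLyapunov θ v < K then Real.exp (θ * v i) else 0) |K|
    (ae_of_all _ fun ω => by
      split_ifs with h
      · rw [abs_of_pos (Real.exp_pos _)]
        exact ((exp_le_expLyapunov θ _ i).trans h.le).trans (le_abs_self K)
      · simp)

lemma sum_integral_exp_q_trunc (θ K : ℝ) :
    ∑ i, ∫ ω, (if expLyapunov θ (M.q ω) < K then Real.exp (θ * M.q ω i) else 0) ∂μ =
      ∫ ω, (if expLyapunov θ (M.q ω) < K then expLyapunov θ (M.q ω) else 0) ∂μ := by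
  rw [← integral_finsetSum _ fun i _ => M.integrable_exp_q_trunc θ K i]
  congr 1 with ω
  split_ifs <;> simp [expLyapunov]

lemma integrable_expLyapunov_q_trunc (θ K : ℝ) :
    Integrable (fun ω => if expLyapunov θ (M.q ω) < K then expLyapunov θ (M.q ω) else 0) μ :=
  (integrable_finsetSum univ fun i _ => M.integrable_exp_q_trunc θ K i).congr <|
    ae_of_all _ fun ω => by dsimp only; split_ifs <;> simp [expLyapunov]

lemma integrable_exp_neg_s_sub_one (hθ : 0 ≤ θ) (i : Fin N) :
    Integrable (fun ω => Real.exp (-(θ * M.s ω i)) - 1) μ :=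
  have := M.hprob
  integrable_comp_of_countable M.meas_s (fun v => Real.exp (-(θ * v i)) - 1) 1
    (ae_of_all _ fun ω => by
      have := Real.exp_le_one_iff.2 (neg_nonpos.2 (by positivity : 0 ≤ θ * M.s ω i))
      rw [abs_le]; constructor <;> linarith [Real.exp_pos (-(θ * M.s ω i))])

lemma integrable_exp_a_sub_one (hθ : 0 ≤ θ) : Integrable (fun ω => Real.exp (θ * M.a ω) - 1) μ :=
  have := M.hprob
  integrable_comp_of_countable M.meas_a (fun n => Real.exp (θ * n) - 1) (Real.exp (θ * amax)) <| by
    filter_upwards [M.a_bdd] with ω ha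
    have h1 := Real.one_le_exp (by positivity : 0 ≤ θ * M.a ω)
    have h2 := Real.exp_le_exp.2 (mul_le_mul_of_nonneg_left ha hθ)
    rw [abs_of_nonneg (by linarith)]
    linarith

lemma integral_exp_neg_s_sub_one_le (hθ : 0 ≤ θ) (hθs : θ * smax ≤ 1) (i : Fin N) :
    ∫ ω, (Real.exp (-(θ * M.s ω i)) - 1) ∂μ ≤ -θ + θ ^ 2 * smax ^ 2 := by
  have := M.hprob
  have h := integral_exp_mul_sub_one_le (t := -θ)
    ((measurable_of_countable fun v : Fin N → ℕ => (v i : ℝ)).comp M.meas_s).aestronglyMeasurable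
    (ae_of_all _ fun ω => Nat.cast_nonneg _) (M.s_bdd i) (by rwa [abs_neg, abs_of_nonneg hθ])
  simpa [M.s_mean i] using h

lemma integral_exp_a_sub_one_le (hθ : 0 ≤ θ) (hθa : θ * amax ≤ 1) :
    ∫ ω, (Real.exp (θ * M.a ω) - 1) ∂μ ≤ θ * (N * (1 - (N : ℝ) ^ (-α))) + θ ^ 2 * amax ^ 2 := by
  have := M.hprob
  have h := integral_exp_mul_sub_one_le (t := θ) (X := fun ω => (M.a ω : ℝ))
    ((measurable_of_countable _).comp M.meas_a).aestronglyMeasurable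
    (ae_of_all _ fun ω => Nat.cast_nonneg _) M.a_bdd (by rwa [abs_of_nonneg hθ])
  rwa [M.a_mean] at h

lemma ae_drift_expLyapunov_trunc_le (hθ : 0 ≤ θ) (K : ℝ) :
    ∀ᵐ ω ∂μ,
      (if expLyapunov θ (M.q ω) < K then expLyapunov θ (M.qplus ω) - expLyapunov θ (M.q ω)
        else 0) ≤
      ∑ i, (if expLyapunov θ (M.q ω) < K then Real.exp (θ * M.q ω i) else 0)
          * (Real.exp (-(θ * M.s ω i)) - 1)
        + (if expLyapunov θ (M.q ω) < K then expLyapunov θ (M.q ω) else 0) / N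
          * (Real.exp (θ * M.a ω) - 1) + N := by
  filter_upwards [M.I_min] with ω hI
  split_ifs with h
  · have hstep : expLyapunov θ (M.qplus ω) ≤ _ :=
      expLyapunov_jsq_step_le hθ (M.q ω) (M.s ω) (M.a ω) (M.I ω)
        fun j => hI ▸ ciInf_le (OrderBot.bddBelow _) j
    linarith
  · simp

lemma drift_expLyapunov_trunc_nonneg (hθ : 0 ≤ θ) (K : ℝ) :
    0 ≤ ∑ i, (∫ ω, (if expLyapunov θ (M.q ω) < K then Real.exp (θ * M.q ω i) else 0) ∂μ)
          * ∫ ω, (Real.exp (-(θ * M.s ω i)) - 1) ∂μ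
      + (∫ ω, (if expLyapunov θ (M.q ω) < K then expLyapunov θ (M.q ω) else 0) ∂μ) / N
          * ∫ ω, (Real.exp (θ * M.a ω) - 1) ∂μ + N := by
  have := M.hprob
  set V : (Fin N → ℕ) → ℝ := expLyapunov θ
  have hservice i := M.integral_mul_eq_of_indep
    (ψ := fun v => if V v < K then Real.exp (θ * v i) else 0)
    (φ := fun p => Real.exp (-(θ * p.2 i)) - 1)
    (M.integrable_exp_q_trunc θ K i) (M.integrable_exp_neg_s_sub_one hθ i)
  have harrival := M.integral_mul_eq_of_indep
    (ψ := fun v => (if V v < K then V v else 0) / N) (φ := fun p => Real.exp (θ * p.1) - 1)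
    ((M.integrable_expLyapunov_q_trunc θ K).div_const N) (M.integrable_exp_a_sub_one hθ)
  have hsum := integrable_finsetSum univ fun i _ => (hservice i).1
  have hR := (hsum.add harrival.1).add (integrable_const (N : ℝ))
  have hDR := M.ae_drift_expLyapunov_trunc_le hθ K
  have hD : Integrable (fun ω => if V (M.q ω) < K then V (M.qplus ω) - V (M.q ω) else 0) μ := by
    refine integrable_of_le_of_le (g₁ := fun _ => -|K|) ?_ (ae_of_all _ fun ω => ?_) hDR
      (integrable_const _) hR
    · exact ((measurable_of_countable fun p : (Fin N → ℕ) × (Fin N → ℕ) =>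
        if V p.2 < K then V p.1 - V p.2 else 0).comp_aemeasurable
          (M.stationary.aemeasurable_fst.prodMk M.meas_q.aemeasurable)).aestronglyMeasurable
    · dsimp only
      split_ifs with h
      · linarith [expLyapunov_nonneg θ (M.qplus ω), le_abs_self K]
      · simp
  refine (integral_ite_lt_sub_nonneg_of_identDistrib (M.stationary : IdentDistrib M.qplus M.q μ μ)
    (measurable_of_countable V) (expLyapunov_nonneg θ) K hD).trans
    ((integral_mono_ae hD hR hDR).trans_eq ?_)
  rw [integral_add' (hsum.add harrival.1) (integrable_const _), integral_add' hsum harrival.1,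
    integral_finsetSum _ fun i _ => (hservice i).1, harrival.2, integral_div]
  simp only [(hservice _).2, integral_const, probReal_univ, one_smul]

lemma integral_expLyapunov_q_trunc_le (hθ : 0 < θ) (hθa : θ * amax ≤ 1) (hθs : θ * smax ≤ 1)
    (hθc : θ ^ 2 * (smax ^ 2 + amax ^ 2) ≤ θ * (N : ℝ) ^ (-α) / 2) (K : ℝ) :
    ∫ ω, (if expLyapunov θ (M.q ω) < K then expLyapunov θ (M.q ω) else 0) ∂μ
      ≤ N / (θ * (N : ℝ) ^ (-α) / 2) := by
  have := M.hprob
  have hN : (1 : ℝ) ≤ N := Nat.one_le_cast.2 M.N_pos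
  set ρ : ℝ := (N : ℝ) ^ (-α)
  set J := ∫ ω, (if expLyapunov θ (M.q ω) < K then expLyapunov θ (M.q ω) else 0) ∂μ
  have hJ : 0 ≤ J := integral_nonneg fun ω => by split_ifs <;> simp [expLyapunov_nonneg]
  have hservice :
      ∑ i, (∫ ω, (if expLyapunov θ (M.q ω) < K then Real.exp (θ * M.q ω i) else 0) ∂μ)
        * ∫ ω, (Real.exp (-(θ * M.s ω i)) - 1) ∂μ ≤ J * (-θ + θ ^ 2 * smax ^ 2) := by
    refine (sum_le_sum fun i _ => mul_le_mul_of_nonneg_left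
      (M.integral_exp_neg_s_sub_one_le hθ.le hθs i)
      (integral_nonneg fun ω => by split_ifs <;> simp [(Real.exp_pos _).le])).trans_eq ?_
    rw [← sum_mul, M.sum_integral_exp_q_trunc]
  have harrival : J / N * ∫ ω, (Real.exp (θ * M.a ω) - 1) ∂μ
      ≤ J * (θ * (1 - ρ) + θ ^ 2 * amax ^ 2) := by
    calc J / N * ∫ ω, (Real.exp (θ * M.a ω) - 1) ∂μ
        ≤ J / N * (θ * (N * (1 - ρ)) + θ ^ 2 * amax ^ 2) := by
          gcongr; exact M.integral_exp_a_sub_one_le hθ.le hθa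
      _ = J * (θ * (1 - ρ) + θ ^ 2 * (amax ^ 2 / N)) := by field_simp
      _ ≤ J * (θ * (1 - ρ) + θ ^ 2 * amax ^ 2) := by
          gcongr; exact div_le_self (sq_nonneg _) hN
  have hdrift := M.drift_expLyapunov_trunc_nonneg hθ.le K
  rw [le_div_iff₀ (by positivity)]
  nlinarith [mul_le_mul_of_nonneg_left hθc hJ]

lemma exists_integrable_expLyapunov :
    ∃ θ > 0, Integrable (fun ω => expLyapunov θ (M.q ω)) μ := by
  have := M.hprob
  have hamax := M.hamax
  have hsmax := M.hsmax
  have hρ : 0 < (N : ℝ) ^ (-α) := Real.rpow_pos_of_pos (Nat.cast_pos.2 M.N_pos) _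
  set c := smax ^ 2 + amax ^ 2
  -- small enough that the second-order terms `θ² c` cost at most half of the drift `-θ N^(-α)`
  set θ := min (min (1 / amax) (1 / smax)) ((N : ℝ) ^ (-α) / (2 * c))
  have hθ : 0 < θ := lt_min (lt_min (by positivity) (by positivity)) (by positivity)
  have hθa : θ * amax ≤ 1 := (le_div_iff₀ hamax).1 ((min_le_left _ _).trans (min_le_left _ _))
  have hθs : θ * smax ≤ 1 := (le_div_iff₀ hsmax).1 ((min_le_left _ _).trans (min_le_right _ _))
  have hθc : θ ^ 2 * c ≤ θ * (N : ℝ) ^ (-α) / 2 := by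
    have : θ * (2 * c) ≤ (N : ℝ) ^ (-α) := (le_div_iff₀ (by positivity)).1 (min_le_right _ _)
    nlinarith
  exact ⟨θ, hθ, integrable_of_integral_ite_lt_le
    ((measurable_of_countable (expLyapunov θ)).comp M.meas_q) (fun ω => expLyapunov_nonneg _ _)
    fun K => M.integral_expLyapunov_q_trunc_le hθ hθa hθs hθc K⟩

end JSQModel

theorem mgf_exists_general
    (N : ℕ) (α amax smax σa2 σs2 : ℝ)
    {Ω : Type} [MeasurableSpace Ω] {μ : Measure Ω}
    (M : JSQModel N α amax smax σa2 σs2 Ω μ) :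
    ∃ Θ : ℝ, 0 < Θ ∧ ∀ θ ∈ Set.Icc (-Θ) Θ,
      Integrable
        (fun ω => Real.exp (θ * (N : ℝ) ^ (-α) * ∑ i, (M.q ω i : ℝ))) μ := by
  have := M.hprob
  obtain ⟨θ, hθ, hV⟩ := M.exists_integrable_expLyapunov
  have hN : (0 : ℝ) < N := Nat.cast_pos.2 M.N_pos
  refine ⟨θ / N * N ^ α, by positivity, fun t ht => ?_⟩
  refine ((integrable_const 1).add hV).mono'
    ((measurable_of_countable fun v : Fin N → ℕ =>
      Real.exp (t * (N : ℝ) ^ (-α) * ∑ i, (v i : ℝ))).comp M.meas_q).aestronglyMeasurable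
    (ae_of_all _ fun ω => ?_)
  rw [Real.norm_of_nonneg (Real.exp_pos _).le]
  refine exp_mul_sum_le_one_add_expLyapunov ?_ (M.q ω)
  calc t * (N : ℝ) ^ (-α) * N ≤ θ / N * N ^ α * N ^ (-α) * N := by gcongr; exact ht.2
    _ = θ := by rw [Real.rpow_neg hN.le]; field_simp

/-- There exists `Θ > 0` such that for every `θ ∈ [−Θ, Θ]`, the
moment generating function `E[exp(θ·N^(−α)·Σᵢ q̄ᵢ)]` is finite. -/
theorem mgf_exists
    (N : ℕ) (hN : 2 ≤ N) (α amax smax σa2 σs2 : ℝ)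
    {Ω : Type} [MeasurableSpace Ω] {μ : Measure Ω}
    (M : JSQModel N α amax smax σa2 σs2 Ω μ) :
    ∃ Θ : ℝ, 0 < Θ ∧ ∀ θ ∈ Set.Icc (-Θ) Θ,
      Integrable
        (fun ω => Real.exp (θ * (N : ℝ) ^ (-α) * ∑ i, (M.q ω i : ℝ))) μ :=
  mgf_exists_general N α amax smax σa2 σs2 M
end

section
/- For every real δ with 0 < δ ≤ 1 − N^(−α), the one-step drift of the squared Euclidean norm satisfies E[‖q⁺‖²] − ‖q‖² ≤ N·(max{amax, smax})² − 2·N^(−α)·Σ_{i=1}^N q_i − 2·δ·‖q_⊥‖. -/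
/-!
Since `(x⁺)² ≤ x²`, coordinatewise `‖q⁺‖² ≤ ‖q‖² + 2⟪q, ã - s⟫ + ‖ã - s‖²`, and
`⟪q, ã⟫ = a · min q` because the arrivals join a shortest queue. With `M = max amax smax`,
taking expectations bounds the drift by
`N M² + 2 N (1 - N^(-α)) min q - 2 Σ qᵢ = N M² - 2 N^(-α) Σ qᵢ - 2 (1 - N^(-α)) ‖q - min q‖₁`.
Finally `‖q_⊥‖₂ ≤ ‖q - min q‖₂ ≤ ‖q - min q‖₁`: the mean is the best constant approximation
in `ℓ²`, and `ℓ¹` dominates `ℓ²` on nonnegative vectors; `δ ≤ 1 - N^(-α)` concludes.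
-/

open MeasureTheory ProbabilityTheory

section Spread

variable {ι : Type*} [Fintype ι]

open Finset in
theorem sum_sq_sub_mean_le_sum_sq_sub (q : ι → ℝ) (c : ℝ) :
    ∑ i, (q i - (∑ j, q j) / Fintype.card ι) ^ 2 ≤ ∑ i, (q i - c) ^ 2 := by
  set N : ℝ := (Fintype.card ι : ℝ)
  set T := ∑ j, q j
  set μ := T / N
  have hT : T = N * μ := by
    rcases isEmpty_or_nonempty ι with _ | _
    · simp [T, N]
    · exact (mul_div_cancel₀ T (by positivity)).symm
  have expand (x : ℝ) : ∑ i, (q i - x) ^ 2 = ∑ i, q i ^ 2 - 2 * x * T + N * x ^ 2 := by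
    simp only [sub_sq, sum_add_distrib, sum_sub_distrib, ← sum_mul, ← mul_sum, sum_const,
      card_univ, nsmul_eq_mul, T, N]
    ring
  rw [expand, expand, hT]
  nlinarith [mul_nonneg (Nat.cast_nonneg _ : 0 ≤ N) (sq_nonneg (μ - c))]

theorem sqrt_sum_sq_sub_mean_le (q : ι → ℝ) {m : ℝ} (hm : ∀ i, m ≤ q i) :
    √(∑ i, (q i - (∑ j, q j) / Fintype.card ι) ^ 2) ≤ ∑ i, q i - Fintype.card ι * m := by
  have hsum : ∑ i, (q i - m) = ∑ i, q i - Fintype.card ι * m := by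
    simp [Finset.sum_sub_distrib]
  rw [← hsum, Real.sqrt_le_left (Finset.sum_nonneg fun i _ ↦ sub_nonneg.2 (hm i))]
  exact (sum_sq_sub_mean_le_sum_sq_sub q m).trans
    (Finset.sum_sq_le_sq_sum_of_nonneg fun i _ ↦ sub_nonneg.2 (hm i))

end Spread

section Drift

theorem max_zero_sq_le_sq (x : ℝ) : max x 0 ^ 2 ≤ x ^ 2 := by
  rcases le_total x 0 with h | h <;> simp [h, sq_nonneg]

theorem sq_sub_le_sq_max {t u A B : ℝ} (ht₀ : 0 ≤ t) (htA : t ≤ A) (hu₀ : 0 ≤ u)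
    (huB : u ≤ B) : (t - u) ^ 2 ≤ max A B ^ 2 :=
  sq_le_sq' (by linarith [le_max_right A B]) (by linarith [le_max_left A B])

variable {ι : Type*} [Fintype ι] [DecidableEq ι]

open Finset in
theorem sum_sq_posPart_add_single_sub_le (q s : ι → ℝ) (k : ι) {a amax smax : ℝ}
    (ha₀ : 0 ≤ a) (ha : a ≤ amax) (hs : ∀ i, 0 ≤ s i ∧ s i ≤ smax) :
    ∑ i, max (q i + (if i = k then a else 0) - s i) 0 ^ 2
      ≤ ∑ i, q i ^ 2 + Fintype.card ι * max amax smax ^ 2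
        + 2 * (q k * a - ∑ i, q i * s i) := by
  set M := max amax smax
  have hterm (i : ι) : max (q i + (if i = k then a else 0) - s i) 0 ^ 2
      ≤ q i ^ 2 + 2 * (q i * if i = k then a else 0) - 2 * (q i * s i) + M ^ 2 := by
    have hjump : ((if i = k then a else 0) - s i) ^ 2 ≤ M ^ 2 := by
      split_ifs
      · exact sq_sub_le_sq_max ha₀ ha (hs i).1 (hs i).2
      · exact sq_sub_le_sq_max le_rfl (ha₀.trans ha) (hs i).1 (hs i).2
    nlinarith [max_zero_sq_le_sq (q i + (if i = k then a else 0) - s i)]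
  calc _ ≤ ∑ i, (q i ^ 2 + 2 * (q i * if i = k then a else 0) - 2 * (q i * s i) + M ^ 2) :=
        sum_le_sum fun i _ ↦ hterm i
    _ = _ := by
      simp only [sum_add_distrib, sum_sub_distrib, ← mul_sum, mul_ite, mul_zero, sum_ite_eq',
        mem_univ, if_true, sum_const, card_univ, nsmul_eq_mul]
      ring

theorem integral_sum_sq_posPart_add_single_sub_le {Ω : Type*} [MeasurableSpace Ω]
    (μ : Measure Ω) [IsProbabilityMeasure μ] (q : ι → ℝ) {m amax smax : ℝ}
    {a : Ω → ℝ} {s : Ω → ι → ℝ} {I : Ω → ι}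
    (ha_int : Integrable a μ) (hs_int : ∀ i, Integrable (fun ω ↦ s ω i) μ)
    (ha_bdd : ∀ᵐ ω ∂μ, 0 ≤ a ω ∧ a ω ≤ amax) (hs_bdd : ∀ i, ∀ᵐ ω ∂μ, 0 ≤ s ω i ∧ s ω i ≤ smax)
    (hI : ∀ᵐ ω ∂μ, q (I ω) = m) :
    ∫ ω, ∑ i, max (q i + (if i = I ω then a ω else 0) - s ω i) 0 ^ 2 ∂μ
      ≤ ∑ i, q i ^ 2 + Fintype.card ι * max amax smax ^ 2
        + 2 * (m * ∫ ω, a ω ∂μ - ∑ i, q i * ∫ ω, s ω i ∂μ) := by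
  set C := ∑ i, q i ^ 2 + Fintype.card ι * max amax smax ^ 2
  have hqs_int : Integrable (fun ω ↦ ∑ i, q i * s ω i) μ :=
    integrable_finsetSum _ fun i _ ↦ (hs_int i).const_mul (q i)
  have ham_int : Integrable (fun ω ↦ m * a ω) μ := ha_int.const_mul m
  have hrest_int : Integrable (fun ω ↦ 2 * (m * a ω - ∑ i, q i * s ω i)) μ :=
    (ham_int.sub hqs_int).const_mul 2
  have hg_int : Integrable (fun ω ↦ C + 2 * (m * a ω - ∑ i, q i * s ω i)) μ :=
    (integrable_const C).add hrest_int
  have hbound : ∀ᵐ ω ∂μ, ∑ i, max (q i + (if i = I ω then a ω else 0) - s ω i) 0 ^ 2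
      ≤ C + 2 * (m * a ω - ∑ i, q i * s ω i) := by
    filter_upwards [ha_bdd, ae_all_iff.2 hs_bdd, hI] with ω ha hs hIω
    simpa [hIω] using sum_sq_posPart_add_single_sub_le q (s ω) (I ω) ha.1 ha.2 hs
  refine (integral_mono_of_nonneg (ae_of_all _ fun ω ↦ Finset.sum_nonneg fun i _ ↦ sq_nonneg _)
    hg_int hbound).trans_eq ?_
  rw [integral_add (integrable_const C) hrest_int, integral_const_mul,
    integral_sub ham_int hqs_int, integral_const_mul,
    integral_finsetSum _ fun i _ ↦ (hs_int i).const_mul (q i)]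
  simp [integral_const_mul]

end Drift

theorem drift_squared_norm_bound_general
    (N : ℕ) (α amax smax : ℝ)
    (q : Fin N → ℝ)
    {Ω : Type} [MeasurableSpace Ω] (μ : Measure Ω) [IsProbabilityMeasure μ]
    (a : Ω → ℝ)
    (ha_bdd : ∀ᵐ ω ∂μ, 0 ≤ a ω ∧ a ω ≤ amax)
    (ha_mean : ∫ ω, a ω ∂μ = N * (1 - (N : ℝ) ^ (-α)))
    (s : Ω → Fin N → ℝ)
    (hs_bdd : ∀ i, ∀ᵐ ω ∂μ, 0 ≤ s ω i ∧ s ω i ≤ smax)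
    (hs_mean : ∀ i, ∫ ω, s ω i ∂μ = 1)
    (I : Ω → Fin N)
    (hI_min : ∀ᵐ ω ∂μ, q (I ω) = ⨅ j, q j)
    (δ : ℝ) (hδ0 : 0 < δ) (hδ : δ ≤ 1 - (N : ℝ) ^ (-α)) :
    (∫ ω, ∑ i, (max (q i + (if i = I ω then a ω else 0) - s ω i) 0) ^ 2 ∂μ)
        - ∑ i, (q i) ^ 2
      ≤ N * (max amax smax) ^ 2 - 2 * (N : ℝ) ^ (-α) * ∑ i, q i
        - 2 * δ * Real.sqrt (∑ i, (q i - (∑ j, q j) / N) ^ 2) := by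
  obtain ⟨ω₀, -⟩ := hI_min.exists
  have hN : (N : ℝ) ≠ 0 := Nat.cast_ne_zero.2 (I ω₀).pos.ne'
  have ha_int : Integrable a μ :=
    .of_integral_ne_zero (by rw [ha_mean]; exact mul_ne_zero hN (by linarith))
  have hs_int (i : Fin N) : Integrable (fun ω ↦ s ω i) μ :=
    .of_integral_ne_zero (by simp [hs_mean])
  have hdrift := integral_sum_sq_posPart_add_single_sub_le μ q ha_int hs_int ha_bdd hs_bdd hI_min
  have hspread := sqrt_sum_sq_sub_mean_le q (m := ⨅ j, q j)
    fun i ↦ ciInf_le (Finite.bddBelow_range q) i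
  simp only [ha_mean, hs_mean, mul_one, Fintype.card_fin] at hdrift hspread
  linarith [mul_le_mul hδ hspread (Real.sqrt_nonneg _) (by linarith)]

/-- One-step JSQ drift bound for the squared Euclidean norm:
for every `δ` with `0 < δ ≤ 1 − N^(−α)`,
`E[‖q⁺‖²] − ‖q‖² ≤ N·(max{amax,smax})² − 2·N^(−α)·Σᵢ qᵢ − 2·δ·‖q⊥‖`. -/
theorem drift_squared_norm_bound
    (N : ℕ) (hN : 2 ≤ N) (α amax smax : ℝ)
    (hα : 0 < α) (hamax : 0 < amax) (hsmax : 0 < smax)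
    (q : Fin N → ℝ) (hq : ∀ i, 0 ≤ q i)
    {Ω : Type} [MeasurableSpace Ω] (μ : Measure Ω) [IsProbabilityMeasure μ]
    (a : Ω → ℝ) (ha_meas : Measurable a)
    (ha_bdd : ∀ᵐ ω ∂μ, 0 ≤ a ω ∧ a ω ≤ amax)
    (ha_mean : ∫ ω, a ω ∂μ = N * (1 - (N : ℝ) ^ (-α)))
    (s : Ω → Fin N → ℝ) (hs_meas : Measurable s)
    (hs_bdd : ∀ i, ∀ᵐ ω ∂μ, 0 ≤ s ω i ∧ s ω i ≤ smax)
    (hs_mean : ∀ i, ∫ ω, s ω i ∂μ = 1)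
    (I : Ω → Fin N) (hI_meas : Measurable I)
    (hI_min : ∀ᵐ ω ∂μ, q (I ω) = ⨅ j, q j)
    (h_indep_a_s : IndepFun a s μ)
    (h_indep_as_I : IndepFun (fun ω => (a ω, s ω)) I μ)
    (δ : ℝ) (hδ0 : 0 < δ) (hδ : δ ≤ 1 - (N : ℝ) ^ (-α)) :
    (∫ ω, ∑ i, (max (q i + (if i = I ω then a ω else 0) - s ω i) 0) ^ 2 ∂μ)
        - ∑ i, (q i) ^ 2
      ≤ N * (max amax smax) ^ 2 - 2 * (N : ℝ) ^ (-α) * ∑ i, q i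
        - 2 * δ * Real.sqrt (∑ i, (q i - (∑ j, q j) / N) ^ 2) :=
  drift_squared_norm_bound_general N α amax smax q μ a ha_bdd ha_mean s hs_bdd hs_mean I hI_min δ
    hδ0 hδ
end

section
/- The one-step drift of the squared norm of the parallel component satisfies E[‖(q⁺)_∥‖²] − ‖q_∥‖² ≥ −2·N^(−α)·Σ_{i=1}^N q_i. -/
/-!
Every queue loses at most what it is served, so the total queue length `X` after the step is at
least `Q + a - ∑ᵢ sᵢ`, where `Q = ∑ᵢ qᵢ`. As `Q ≥ 0`, the tangent line of `x ↦ x²` at `Q` gives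
`X² ≥ 2Q (Q + a - ∑ᵢ sᵢ) - Q²`, and taking expectations with `E[a] - E[∑ᵢ sᵢ] = -N^(1-α)` yields
`E[X²] ≥ Q² - 2 N^(1-α) Q`; dividing by `N` is the claim, since `‖x_∥‖² = (∑ᵢ xᵢ)² / N`.
-/

open MeasureTheory ProbabilityTheory

/-- The paper's `q⁺`, with the `a` arrivals routed to queue `I`. -/
def queueStep {ι : Type*} [DecidableEq ι] (q : ι → ℝ) (a : ℝ) (s : ι → ℝ) (I : ι) : ι → ℝ :=
  fun i => max (q i + (if i = I then a else 0) - s i) 0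

section QueueStep

variable {ι : Type*} [Fintype ι] [DecidableEq ι] (q : ι → ℝ) (a : ℝ) (s : ι → ℝ) (I : ι)

lemma sum_sub_sum_le_sum_queueStep : ∑ i, q i + a - ∑ i, s i ≤ ∑ i, queueStep q a s I i :=
  calc ∑ i, q i + a - ∑ i, s i = ∑ i, (q i + (if i = I then a else 0) - s i) := by
        rw [Finset.sum_sub_distrib, Finset.sum_add_distrib, Fintype.sum_ite_eq']
    _ ≤ _ := Finset.sum_le_sum fun i _ => le_max_left _ 0

lemma sum_queueStep_nonneg : 0 ≤ ∑ i, queueStep q a s I i :=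
  Finset.sum_nonneg fun _ _ => le_max_right _ 0

variable {q a s} in
lemma sum_queueStep_le (hq : ∀ i, 0 ≤ q i) (ha : 0 ≤ a) (hs : ∀ i, 0 ≤ s i) :
    ∑ i, queueStep q a s I i ≤ ∑ i, q i + a :=
  calc ∑ i, queueStep q a s I i ≤ ∑ i, (q i + (if i = I then a else 0)) := by
        refine Finset.sum_le_sum fun i _ => max_le (by linarith [hs i]) ?_
        have := hq i
        split_ifs <;> linarith
    _ = ∑ i, q i + a := by rw [Finset.sum_add_distrib, Fintype.sum_ite_eq']

end QueueStep

section Expectation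

variable {Ω : Type*} [MeasurableSpace Ω] {μ : Measure Ω}

lemma integrable_of_ae_mem_Icc [IsFiniteMeasure μ] {f : Ω → ℝ} (hf : Measurable f) {C : ℝ}
    (hbdd : ∀ᵐ ω ∂μ, 0 ≤ f ω ∧ f ω ≤ C) : Integrable f μ :=
  Integrable.of_bound hf.aestronglyMeasurable C <| hbdd.mono fun _ h => by
    rw [Real.norm_eq_abs, abs_of_nonneg h.1]; exact h.2

/-- Tangent line of `x ↦ x²` at `c`. -/
lemma two_mul_integral_sub_sq_le_integral_sq [IsProbabilityMeasure μ] {X Y : Ω → ℝ} {c : ℝ}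
    (hc : 0 ≤ c) (hY : Integrable Y μ) (hX : Integrable (fun ω => X ω ^ 2) μ)
    (hYX : Y ≤ᵐ[μ] X) :
    2 * c * ∫ ω, Y ω ∂μ - c ^ 2 ≤ ∫ ω, X ω ^ 2 ∂μ := by
  have hmono : ∫ ω, (2 * c * Y ω - c ^ 2) ∂μ ≤ ∫ ω, X ω ^ 2 ∂μ :=
    integral_mono_ae ((hY.const_mul _).sub (integrable_const _)) hX <|
      hYX.mono fun ω h => by nlinarith [sq_nonneg (X ω - c)]
  rwa [integral_sub (hY.const_mul _) (integrable_const _), integral_const_mul, integral_const,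
    probReal_univ, one_smul] at hmono

variable {ι : Type*} [Fintype ι] [DecidableEq ι] [MeasurableSpace ι] [MeasurableSingletonClass ι]
  {q : ι → ℝ} {a : Ω → ℝ} {s : Ω → ι → ℝ} {I : Ω → ι}

lemma measurable_sum_queueStep (ha : Measurable a) (hs : Measurable s) (hI : Measurable I) :
    Measurable fun ω => ∑ i, queueStep q (a ω) (s ω) (I ω) i := by
  refine Finset.measurable_sum _ fun i _ => ?_
  have hI_eq : MeasurableSet {ω | i = I ω} := by
    simpa [Set.preimage, eq_comm] using hI (measurableSet_singleton i)
  exact ((measurable_const.add (Measurable.ite hI_eq ha measurable_const)).sub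
    ((measurable_pi_apply i).comp hs)).max measurable_const

lemma integrable_sq_sum_queueStep [IsFiniteMeasure μ] {amax : ℝ} (hq : ∀ i, 0 ≤ q i)
    (ha_meas : Measurable a) (ha : ∀ᵐ ω ∂μ, 0 ≤ a ω ∧ a ω ≤ amax)
    (hs_meas : Measurable s) (hs : ∀ᵐ ω ∂μ, ∀ i, 0 ≤ s ω i) (hI : Measurable I) :
    Integrable (fun ω => (∑ i, queueStep q (a ω) (s ω) (I ω) i) ^ 2) μ := by
  refine Integrable.of_bound ((measurable_sum_queueStep ha_meas hs_meas hI).pow_const 2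
    |>.aestronglyMeasurable) ((∑ i, q i + amax) ^ 2) ?_
  filter_upwards [ha, hs] with ω ha hs
  have h0 := sum_queueStep_nonneg q (a ω) (s ω) (I ω)
  have hle := sum_queueStep_le (I ω) hq ha.1 hs
  rw [Real.norm_eq_abs, abs_of_nonneg (by positivity)]
  exact pow_le_pow_left₀ h0 (by linarith [ha.2]) 2

end Expectation

theorem drift_squared_parallel_norm_bound_general
    (N : ℕ) (hN : 2 ≤ N) (α amax smax : ℝ)
    (q : Fin N → ℝ) (hq : ∀ i, 0 ≤ q i)
    {Ω : Type} [MeasurableSpace Ω] (μ : Measure Ω) [IsProbabilityMeasure μ]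
    (a : Ω → ℝ) (ha_meas : Measurable a)
    (ha_bdd : ∀ᵐ ω ∂μ, 0 ≤ a ω ∧ a ω ≤ amax)
    (ha_mean : ∫ ω, a ω ∂μ = N * (1 - (N : ℝ) ^ (-α)))
    (s : Ω → Fin N → ℝ) (hs_meas : Measurable s)
    (hs_bdd : ∀ i, ∀ᵐ ω ∂μ, 0 ≤ s ω i ∧ s ω i ≤ smax)
    (hs_mean : ∀ i, ∫ ω, s ω i ∂μ = 1)
    (I : Ω → Fin N) (hI_meas : Measurable I) :
    (∫ ω, (∑ i, max (q i + (if i = I ω then a ω else 0) - s ω i) 0) ^ 2 / N ∂μ)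
        - (∑ i, q i) ^ 2 / N
      ≥ -(2 * (N : ℝ) ^ (-α) * ∑ i, q i) := by
  set Q := ∑ i, q i
  have hQ : 0 ≤ Q := Finset.sum_nonneg fun i _ => hq i
  have ha_int : Integrable a μ := integrable_of_ae_mem_Icc ha_meas ha_bdd
  have hs_int i : Integrable (fun ω => s ω i) μ :=
    integrable_of_ae_mem_Icc ((measurable_pi_apply i).comp hs_meas) (hs_bdd i)
  have hS_int : Integrable (fun ω => ∑ i, s ω i) μ := integrable_finsetSum _ fun i _ => hs_int i
  have hQa_int : Integrable (fun ω => Q + a ω) μ := (integrable_const Q).add ha_int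
  have hY_mean : ∫ ω, (Q + a ω - ∑ i, s ω i) ∂μ = Q - N * (N : ℝ) ^ (-α) := by
    rw [integral_sub hQa_int hS_int, integral_add (integrable_const Q) ha_int, integral_const,
      ha_mean, integral_finsetSum _ fun i _ => hs_int i]
    simp only [hs_mean, probReal_univ, one_smul, Finset.sum_const, Finset.card_univ,
      Fintype.card_fin, nsmul_eq_mul, mul_one]
    ring
  have hX_sq := integrable_sq_sum_queueStep hq ha_meas ha_bdd hs_meas
    (ae_all_iff.2 fun i => (hs_bdd i).mono fun _ h => h.1) hI_meas
  have key := two_mul_integral_sub_sq_le_integral_sq (Y := fun ω => Q + a ω - ∑ i, s ω i) hQ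
    (hQa_int.sub hS_int) hX_sq (ae_of_all _ fun ω => sum_sub_sum_le_sum_queueStep q _ _ (I ω))
  rw [hY_mean] at key
  have hN_pos : (0 : ℝ) < N := by exact_mod_cast (by omega : 0 < N)
  change ∫ ω, (∑ i, queueStep q (a ω) (s ω) (I ω) i) ^ 2 / N ∂μ - Q ^ 2 / N ≥ _
  rw [integral_div, ge_iff_le, ← sub_div, le_div_iff₀ hN_pos]
  linarith

/-- One-step JSQ drift bound for the squared norm of the
parallel component: `E[‖(q⁺)∥‖²] − ‖q∥‖² ≥ −2·N^(−α)·Σᵢ qᵢ`. Here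
`‖x∥‖² = (Σᵢ xᵢ)²/N`. -/
theorem drift_squared_parallel_norm_bound
    (N : ℕ) (hN : 2 ≤ N) (α amax smax : ℝ)
    (hα : 0 < α) (hamax : 0 < amax) (hsmax : 0 < smax)
    (q : Fin N → ℝ) (hq : ∀ i, 0 ≤ q i)
    {Ω : Type} [MeasurableSpace Ω] (μ : Measure Ω) [IsProbabilityMeasure μ]
    (a : Ω → ℝ) (ha_meas : Measurable a)
    (ha_bdd : ∀ᵐ ω ∂μ, 0 ≤ a ω ∧ a ω ≤ amax)
    (ha_mean : ∫ ω, a ω ∂μ = N * (1 - (N : ℝ) ^ (-α)))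
    (s : Ω → Fin N → ℝ) (hs_meas : Measurable s)
    (hs_bdd : ∀ i, ∀ᵐ ω ∂μ, 0 ≤ s ω i ∧ s ω i ≤ smax)
    (hs_mean : ∀ i, ∫ ω, s ω i ∂μ = 1)
    (I : Ω → Fin N) (hI_meas : Measurable I)
    (hI_min : ∀ᵐ ω ∂μ, q (I ω) = ⨅ j, q j)
    (h_indep_a_s : IndepFun a s μ)
    (h_indep_as_I : IndepFun (fun ω => (a ω, s ω)) I μ) :
    (∫ ω, (∑ i, max (q i + (if i = I ω then a ω else 0) - s ω i) 0) ^ 2 / N ∂μ)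
        - (∑ i, q i) ^ 2 / N
      ≥ -(2 * (N : ℝ) ^ (-α) * ∑ i, q i) :=
  drift_squared_parallel_norm_bound_general N hN α amax smax q hq μ a ha_meas ha_bdd ha_mean s
    hs_meas hs_bdd hs_mean I hI_meas
end

section
/- Assume conditions (C1) and (C2) hold and that X(k) converges in distribution, as k → ∞, to a random variable X̄ with values in 𝒳. Then for every integer r ≥ 1, E[Z(X̄)^r] ≤ (2κ)^r + (4D)^r·((D + η)/η)^r·r!. -/
/-!
The laws `p k` of `X k` satisfy `p (k + 1) = K ∘ₘ p k`, so by Fatou's lemma on singletons the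
law `ν` of `X̄` satisfies `K ∘ₘ ν ≤ ν`, hence is `K`-invariant. Integrating the one-step drift of
the bounded test function `min (Z - a)⁺ M` against `ν` (its mean cancels by invariance) and
letting `M → ∞` gives `η ν(Z > a + D) ≤ D ν(a - D < Z ≤ a + D)` whenever `κ ≤ a + D`, that is
`ν(Z > a + D) ≤ q ν(Z > a - D)` with `q = D / (D + η)`. Iterating in steps of `2D` from `κ`
yields the geometric tail `ν(Z > κ + 2 D m) ≤ q ^ (m + 1)`. On `{Z > 2κ}` we have
`Z ≤ 4 D ⌈(Z - κ) / 2D⌉`, and summing the tail against the increments of `n ↦ n ^ r`, with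
`∑ n ^ r q ^ n ≤ r! / (1 - q) ^ (r + 1)`, gives the moment bound.
-/

open MeasureTheory ProbabilityTheory Filter Topology
open scoped ENNReal Nat

theorem MeasureTheory.Measure.le_of_forall_singleton_le {α : Type*} [MeasurableSpace α]
    [Countable α] [MeasurableSingletonClass α] {μ ν : Measure α} (h : ∀ x, μ {x} ≤ ν {x}) :
    μ ≤ ν := fun s => by
  rw [← lintegral_indicator_one s.to_countable.measurableSet, lintegral_countable',
    ← lintegral_indicator_one s.to_countable.measurableSet, lintegral_countable']
  exact ENNReal.tsum_le_tsum fun x => mul_le_mul_right (h x) _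

namespace ProbabilityTheory.Kernel

variable {α : Type*} [MeasurableSpace α] {K : Kernel α α}

theorem Invariant.lintegral_le_of_forall_lintegral_add_le {ν : Measure α} (hK : K.Invariant ν)
    {g u v : α → ℝ≥0∞} (hg : Measurable g) (hg_fin : ∫⁻ x, g x ∂ν ≠ ∞)
    (h : ∀ x, ∫⁻ y, g y ∂K x + u x ≤ g x + v x) :
    ∫⁻ x, u x ∂ν ≤ ∫⁻ x, v x ∂ν := by
  have hint := lintegral_mono h (μ := ν)
  rwa [lintegral_add_left hg.lintegral_kernel, lintegral_add_left hg,
    ← Measure.lintegral_bind K.measurable.aemeasurable hg.aemeasurable, hK.def,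
    ENNReal.add_le_add_iff_left hg_fin] at hint

variable [Countable α] [MeasurableSingletonClass α] [IsMarkovKernel K]

theorem map_eq_comp_map_of_condExp_indicator_ae_eq {Ω : Type*} {m mΩ : MeasurableSpace Ω}
    {μ : Measure Ω} [IsFiniteMeasure μ] (hm : m ≤ mΩ) {X Y : Ω → α} (hX : Measurable X)
    (hY : Measurable Y)
    (hcond : ∀ y, μ[(Y ⁻¹' {y}).indicator (fun _ => (1 : ℝ)) | m]
      =ᵐ[μ] fun ω => (K (X ω) {y}).toReal) :
    μ.map Y = K ∘ₘ μ.map X := by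
  refine (ext_iff_measureReal_singleton).mpr fun y => ?_
  have hY_meas : MeasurableSet (Y ⁻¹' {y}) := hY (measurableSet_singleton y)
  have hK_meas : Measurable fun x => K x {y} := K.measurable_coe (measurableSet_singleton y)
  calc (μ.map Y).real {y} = ∫ ω, (Y ⁻¹' {y}).indicator (fun _ => (1 : ℝ)) ω ∂μ := by
        rw [map_measureReal_apply hY (measurableSet_singleton y),
          integral_indicator_const _ hY_meas, smul_eq_mul, mul_one]
    _ = ∫ ω, (K (X ω) {y}).toReal ∂μ := by
        rw [← integral_condExp hm]
        exact integral_congr_ae (hcond y)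
    _ = (K ∘ₘ μ.map X).real {y} := by
        rw [integral_toReal (f := fun ω => K (X ω) {y}) (hK_meas.comp hX).aemeasurable
            (ae_of_all _ fun ω => measure_lt_top _ _),
          measureReal_def, Measure.bind_apply (measurableSet_singleton y) K.aemeasurable,
          MeasureTheory.lintegral_map hK_meas hX]

theorem invariant_of_tendsto_measure_singleton {p : ℕ → Measure α} {ν : Measure α}
    [IsFiniteMeasure ν] (hp : ∀ k, p (k + 1) = K ∘ₘ p k)
    (hlim : ∀ x, Tendsto (fun k => p k {x}) atTop (𝓝 (ν {x}))) :
    K.Invariant ν := by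
  refine Measure.eq_of_le_of_measure_univ_eq (Measure.le_of_forall_singleton_le fun y => ?_)
    (by simp [Measure.bind_apply MeasurableSet.univ K.aemeasurable])
  rw [Measure.bind_apply (measurableSet_singleton y) K.aemeasurable, lintegral_countable']
  refine ENNReal.summable.tsum_le_of_sum_le fun s => le_of_tendsto_of_tendsto'
    (tendsto_finsetSum s fun x _ =>
      ENNReal.Tendsto.const_mul (hlim x) (Or.inr (measure_ne_top _ _)))
    ((hlim y).comp (tendsto_add_atTop_nat 1)) fun k => ?_
  rw [Function.comp_apply, hp, Measure.bind_apply (measurableSet_singleton y) K.aemeasurable,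
    lintegral_countable']
  exact ENNReal.sum_le_tsum s

end ProbabilityTheory.Kernel

section Drift

variable {α : Type*} [MeasurableSpace α] {K : Kernel α α} {Z : α → ℝ} {κ η D : ℝ}

theorem ae_abs_sub_le_of_measure_eq_zero {μ : Measure α} {c : ℝ}
    (h : μ {y | D < |Z y - c|} = 0) : ∀ᵐ y ∂μ, |Z y - c| ≤ D :=
  (measure_eq_zero_iff_ae_notMem.mp h).mono fun _ hy => not_lt.mp hy

theorem integrable_of_ae_abs_sub_le {μ : Measure α} [IsFiniteMeasure μ] {c : ℝ}
    (hZm : Measurable Z) (h : ∀ᵐ y ∂μ, |Z y - c| ≤ D) : Integrable Z μ :=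
  (integrable_const (|c| + D)).mono' hZm.aestronglyMeasurable <| h.mono fun y hy => by
    rw [Real.norm_eq_abs]
    linarith [abs_sub_abs_le_abs_sub (Z y) c]

theorem sub_le_integral_of_ae_abs_sub_le {μ : Measure α} [IsProbabilityMeasure μ] {c : ℝ}
    (hZm : Measurable Z) (h : ∀ᵐ y ∂μ, |Z y - c| ≤ D) : c - D ≤ ∫ y, Z y ∂μ := by
  have hmono := integral_mono_ae (integrable_const (c - D)) (integrable_of_ae_abs_sub_le hZm h)
    (h.mono fun y hy => by linarith [(abs_le.mp hy).1])
  rwa [integral_const, probReal_univ, one_smul] at hmono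

variable [IsMarkovKernel K]

theorem drift_le_jump (hZm : Measurable Z)
    (hdrift : ∀ x, κ ≤ Z x → ∫ y, Z y ∂K x - Z x ≤ -η)
    (hjump : ∀ x, K x {y | D < |Z y - Z x|} = 0) {x : α} (hx : κ ≤ Z x) : η ≤ D := by
  linarith [hdrift x hx,
    sub_le_integral_of_ae_abs_sub_le hZm (ae_abs_sub_le_of_measure_eq_zero (hjump x))]

theorem lintegral_ofReal_sub_add_le (hZm : Measurable Z)
    (hdrift : ∀ x, κ ≤ Z x → ∫ y, Z y ∂K x - Z x ≤ -η) (hη : 0 ≤ η) {x : α} {a : ℝ}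
    (hjump : ∀ᵐ y ∂K x, |Z y - Z x| ≤ D) (hκ : κ ≤ Z x) (ha : a + D ≤ Z x) :
    ∫⁻ y, ENNReal.ofReal (Z y - a) ∂K x + ENNReal.ofReal η ≤ ENNReal.ofReal (Z x - a) := by
  have hint := integrable_of_ae_abs_sub_le hZm hjump
  have hmean := sub_le_integral_of_ae_abs_sub_le hZm hjump
  rw [← ofReal_integral_eq_lintegral_ofReal (f := fun y => Z y - a) (hint.sub (integrable_const a))
      (hjump.mono fun y hy => by simp only [Pi.zero_apply]; linarith [(abs_le.mp hy).1]),
    integral_sub hint (integrable_const a), integral_const, probReal_univ, one_smul,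
    ← ENNReal.ofReal_add (by linarith) hη]
  exact ENNReal.ofReal_le_ofReal (by linarith [hdrift x hκ])

theorem lintegral_truncation_add_indicator_le (hZm : Measurable Z)
    (hdrift : ∀ x, κ ≤ Z x → ∫ y, Z y ∂K x - Z x ≤ -η)
    (hjump : ∀ x, K x {y | D < |Z y - Z x|} = 0) (hη : 0 ≤ η) (hD : 0 ≤ D) {a : ℝ}
    (ha : κ ≤ a + D) (M : ℝ) (x : α) :
    ∫⁻ y, ENNReal.ofReal (min (Z y - a) M) ∂K x
        + {x | a + D < Z x ∧ Z x ≤ a + M}.indicator (fun _ => ENNReal.ofReal η) x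
      ≤ ENNReal.ofReal (min (Z x - a) M)
        + {x | a - D < Z x ∧ Z x ≤ a + D}.indicator (fun _ => ENNReal.ofReal D) x := by
  have hx := ae_abs_sub_le_of_measure_eq_zero (hjump x)
  set g : α → ℝ≥0∞ := fun y => ENNReal.ofReal (min (Z y - a) M)
  have hg_le {c : ℝ≥0∞} (h : ∀ᵐ y ∂K x, g y ≤ c) : ∫⁻ y, g y ∂K x ≤ c :=
    (lintegral_mono_ae h).trans (by rw [lintegral_const, measure_univ, mul_one])
  by_cases hA : a + D < Z x ∧ Z x ≤ a + M
  · rw [Set.indicator_of_mem (s := {x | a + D < Z x ∧ Z x ≤ a + M}) hA,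
      Set.indicator_of_notMem (s := {x | a - D < Z x ∧ Z x ≤ a + D})
        fun hB => by linarith [hB.2, hA.1],
      add_zero, min_eq_left (by linarith : Z x - a ≤ M)]
    calc ∫⁻ y, g y ∂K x + ENNReal.ofReal η
        ≤ ∫⁻ y, ENNReal.ofReal (Z y - a) ∂K x + ENNReal.ofReal η :=
          add_le_add_left (lintegral_mono fun y => ENNReal.ofReal_le_ofReal (min_le_left _ _)) _
      _ ≤ ENNReal.ofReal (Z x - a) :=
          lintegral_ofReal_sub_add_le hZm hdrift hη hx (by linarith) hA.1.le
  rw [Set.indicator_of_notMem (s := {x | a + D < Z x ∧ Z x ≤ a + M}) hA, add_zero]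
  rcases le_or_gt (Z x) (a - D) with hlow | hlow
  · refine (hg_le (hx.mono fun y hy => ?_)).trans zero_le
    exact (ENNReal.ofReal_eq_zero.mpr ((min_le_left _ _).trans
      (by linarith [(abs_le.mp hy).2]))).le
  rcases le_or_gt (Z x) (a + D) with hmid | hhigh
  · rw [Set.indicator_of_mem (s := {x | a - D < Z x ∧ Z x ≤ a + D}) ⟨hlow, hmid⟩]
    refine hg_le (hx.mono fun y hy => (ENNReal.ofReal_le_ofReal ?_).trans ENNReal.ofReal_add_le)
    rw [← min_add_add_right]
    exact min_le_min (by linarith [(abs_le.mp hy).2]) (le_add_of_nonneg_right hD)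
  · have hM : M < Z x - a := by
      by_contra! h
      exact hA ⟨hhigh, by linarith⟩
    rw [min_eq_right hM.le]
    exact (hg_le (ae_of_all _ fun y => ENNReal.ofReal_le_ofReal (min_le_right _ _))).trans
      le_self_add

end Drift

theorem tsum_pow_mul_geometric_le (r : ℕ) {q : ℝ} (hq0 : 0 ≤ q) (hq1 : q < 1) :
    ∑' n : ℕ, (n : ℝ) ^ r * q ^ n ≤ r ! / (1 - q) ^ (r + 1) := by
  have hq : ‖q‖ < 1 := by rwa [Real.norm_of_nonneg hq0]
  have hpow_le (n : ℕ) : (n : ℝ) ^ r ≤ r ! * (n + r).choose r := by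
    have h := Nat.pow_sub_le_descFactorial (n + r) r
    rw [Nat.descFactorial_eq_factorial_mul_choose] at h
    calc (n : ℝ) ^ r ≤ ((n + r + 1 - r : ℕ) : ℝ) ^ r := by gcongr; omega
      _ ≤ r ! * (n + r).choose r := by exact_mod_cast h
  calc ∑' n : ℕ, (n : ℝ) ^ r * q ^ n ≤ ∑' n : ℕ, r ! * ((n + r).choose r * q ^ n) := by
        refine (summable_pow_mul_geometric_of_norm_lt_one r hq).tsum_le_tsum (fun n => ?_)
          ((summable_choose_mul_geometric_of_norm_lt_one r hq).mul_left _)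
        rw [← mul_assoc]
        exact mul_le_mul_of_nonneg_right (hpow_le n) (pow_nonneg hq0 n)
    _ = r ! / (1 - q) ^ (r + 1) := by
        rw [tsum_mul_left, tsum_choose_mul_geometric_of_norm_lt_one r hq, mul_one_div]

theorem tsum_ofReal_pow_succ_sub_pow_mul_geometric_le (r : ℕ) {q : ℝ} (hq0 : 0 ≤ q)
    (hq1 : q < 1) :
    ∑' m : ℕ, ENNReal.ofReal ((((m : ℝ) + 1) ^ r - (m : ℝ) ^ r) * q ^ (m + 1))
      ≤ ENNReal.ofReal (r ! / (1 - q) ^ r) := by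
  set f : ℕ → ℝ := fun n => (n : ℝ) ^ r * q ^ n
  have hf : Summable f :=
    summable_pow_mul_geometric_of_norm_lt_one r (by rwa [Real.norm_of_nonneg hq0])
  have hf_succ : Summable fun m : ℕ => f (m + 1) := (summable_nat_add_iff 1).mpr hf
  have hterm (m : ℕ) : (((m : ℝ) + 1) ^ r - (m : ℝ) ^ r) * q ^ (m + 1) = f (m + 1) - q * f m := by
    simp only [f]; push_cast; ring
  have hnonneg (m : ℕ) : 0 ≤ (((m : ℝ) + 1) ^ r - (m : ℝ) ^ r) * q ^ (m + 1) :=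
    mul_nonneg (sub_nonneg.mpr (by gcongr; linarith)) (pow_nonneg hq0 _)
  simp_rw [hterm] at hnonneg ⊢
  rw [← ENNReal.ofReal_tsum_of_nonneg hnonneg (hf_succ.sub (hf.mul_left q))]
  refine ENNReal.ofReal_le_ofReal ?_
  have hf0 : 0 ≤ f 0 := by simp only [f]; positivity
  have hshift := hf.tsum_eq_zero_add
  rw [hf_succ.tsum_sub (hf.mul_left q), tsum_mul_left]
  calc ∑' m, f (m + 1) - q * ∑' m, f m ≤ (1 - q) * ∑' n, f n := by linarith
    _ ≤ (1 - q) * (r ! / (1 - q) ^ (r + 1)) :=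
        mul_le_mul_of_nonneg_left (tsum_pow_mul_geometric_le r hq0 hq1) (by linarith)
    _ = r ! / (1 - q) ^ r := by
        have hq : 1 - q ≠ 0 := by linarith
        field_simp
        ring

theorem lintegral_natCast_pow_eq_tsum {α : Type*} [MeasurableSpace α] (μ : Measure α)
    {N : α → ℕ} (hN : Measurable N) {r : ℕ} (hr : r ≠ 0) :
    ∫⁻ x, (N x : ℝ≥0∞) ^ r ∂μ
      = ∑' m : ℕ, ENNReal.ofReal (((m : ℝ) + 1) ^ r - (m : ℝ) ^ r) * μ {x | m < N x} := by
  set c : ℕ → ℝ≥0∞ := fun m => ENNReal.ofReal (((m : ℝ) + 1) ^ r - (m : ℝ) ^ r)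
  have htelescope (n : ℕ) : ∑ m ∈ Finset.range n, (((m : ℝ) + 1) ^ r - (m : ℝ) ^ r) = n ^ r := by
    simpa [zero_pow hr] using Finset.sum_range_sub (fun m : ℕ => (m : ℝ) ^ r) n
  have hpow (x : α) : (N x : ℝ≥0∞) ^ r = ∑' m : ℕ, {x | m < N x}.indicator (fun _ => c m) x := by
    rw [tsum_eq_sum (s := Finset.range (N x)) (fun m hm => by simp_all),
      Finset.sum_congr rfl (fun m hm => Set.indicator_of_mem (s := {x | m < N x})
        (Finset.mem_range.mp hm) _),
      ← ENNReal.ofReal_sum_of_nonneg (fun m _ => sub_nonneg.mpr (by gcongr; linarith)),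
      htelescope,
      ← ENNReal.ofReal_natCast, ← ENNReal.ofReal_pow (Nat.cast_nonneg _)]
  have hmeas (m : ℕ) : MeasurableSet {x | m < N x} := hN measurableSet_Ioi
  simp_rw [hpow]
  rw [lintegral_tsum fun m => (measurable_const.indicator (hmeas m)).aemeasurable]
  exact tsum_congr fun m => lintegral_indicator_const (hmeas m) _

theorem lintegral_natCast_pow_le_of_measure_lt_le_geometric {α : Type*} [MeasurableSpace α]
    {μ : Measure α} {N : α → ℕ} (hN : Measurable N) {q : ℝ} (hq0 : 0 ≤ q) (hq1 : q < 1)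
    (htail : ∀ m : ℕ, μ {x | m < N x} ≤ ENNReal.ofReal (q ^ (m + 1))) {r : ℕ} (hr : r ≠ 0) :
    ∫⁻ x, (N x : ℝ≥0∞) ^ r ∂μ ≤ ENNReal.ofReal (r ! / (1 - q) ^ r) := by
  rw [lintegral_natCast_pow_eq_tsum μ hN hr]
  refine le_trans (ENNReal.tsum_le_tsum fun m => ?_)
    (tsum_ofReal_pow_succ_sub_pow_mul_geometric_le r hq0 hq1)
  rw [ENNReal.ofReal_mul (sub_nonneg.mpr (by gcongr; linarith))]
  exact mul_le_mul_right (htail m) _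

theorem lintegral_ofReal_pow_le_of_tail_le_geometric {α : Type*} [MeasurableSpace α]
    {ν : Measure α} [IsProbabilityMeasure ν] {Z : α → ℝ} (hZm : Measurable Z) (hZ : ∀ x, 0 ≤ Z x)
    {κ D q : ℝ} (hD : 0 < D) (hq0 : 0 ≤ q) (hq1 : q < 1)
    (htail : ∀ m : ℕ, ν {x | κ + 2 * D * m < Z x} ≤ ENNReal.ofReal (q ^ (m + 1)))
    {r : ℕ} (hr : r ≠ 0) :
    ∫⁻ x, ENNReal.ofReal (Z x ^ r) ∂ν
      ≤ ENNReal.ofReal ((2 * κ) ^ r + (4 * D) ^ r * (r ! / (1 - q) ^ r)) := by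
  have hκ : 0 ≤ κ := by
    by_contra! hκ
    have h := htail 0
    rw [show {x | κ + 2 * D * ((0 : ℕ) : ℝ) < Z x} = Set.univ from
      Set.eq_univ_of_forall fun x => by simpa using hκ.trans_le (hZ x), measure_univ,
      zero_add, pow_one, ENNReal.one_le_ofReal] at h
    linarith
  set N : α → ℕ := fun x => ⌈(Z x - κ) / (2 * D)⌉₊
  have hN : Measurable N := ((hZm.sub_const κ).div_const _).nat_ceil
  have hN_lt (m : ℕ) : {x | m < N x} = {x | κ + 2 * D * m < Z x} := by
    ext x
    simp only [Set.mem_ofPred_eq, N, Nat.lt_ceil, lt_div_iff₀ (by positivity : 0 < 2 * D)]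
    constructor <;> intro h <;> linarith
  have hpointwise (x : α) : ENNReal.ofReal (Z x ^ r)
      ≤ ENNReal.ofReal ((2 * κ) ^ r) + ENNReal.ofReal ((4 * D) ^ r) * (N x : ℝ≥0∞) ^ r := by
    rcases le_or_gt (Z x) (2 * κ) with hle | hgt
    · exact (ENNReal.ofReal_le_ofReal (pow_le_pow_left₀ (hZ x) hle r)).trans le_self_add
    · have hceil : Z x - κ ≤ 2 * D * N x :=
        (div_le_iff₀' (by positivity)).mp (Nat.le_ceil ((Z x - κ) / (2 * D)))
      calc ENNReal.ofReal (Z x ^ r) ≤ ENNReal.ofReal ((4 * D * N x) ^ r) :=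
            ENNReal.ofReal_le_ofReal (pow_le_pow_left₀ (hZ x) (by linarith) r)
        _ = ENNReal.ofReal ((4 * D) ^ r) * (N x : ℝ≥0∞) ^ r := by
            rw [mul_pow, ENNReal.ofReal_mul (by positivity),
              ENNReal.ofReal_pow (Nat.cast_nonneg (N x)), ENNReal.ofReal_natCast]
        _ ≤ _ := le_add_self
  have hmoment := lintegral_natCast_pow_le_of_measure_lt_le_geometric hN hq0 hq1
    (fun m => (hN_lt m).symm ▸ htail m) hr
  calc ∫⁻ x, ENNReal.ofReal (Z x ^ r) ∂ν
      ≤ ∫⁻ x, ENNReal.ofReal ((2 * κ) ^ r) + ENNReal.ofReal ((4 * D) ^ r) * (N x : ℝ≥0∞) ^ r ∂ν :=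
        lintegral_mono hpointwise
    _ = ENNReal.ofReal ((2 * κ) ^ r)
          + ENNReal.ofReal ((4 * D) ^ r) * ∫⁻ x, (N x : ℝ≥0∞) ^ r ∂ν := by
        rw [lintegral_add_left measurable_const, lintegral_const, measure_univ, mul_one,
          lintegral_const_mul _ (by fun_prop)]
    _ ≤ ENNReal.ofReal ((2 * κ) ^ r)
          + ENNReal.ofReal ((4 * D) ^ r) * ENNReal.ofReal (r ! / (1 - q) ^ r) := by
        gcongr
    _ = _ := by
        rw [← ENNReal.ofReal_mul (by positivity),
          ← ENNReal.ofReal_add (by positivity) (by positivity)]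

namespace ProbabilityTheory.Kernel

variable {α : Type*} [MeasurableSpace α] {K : Kernel α α} [IsMarkovKernel K] {ν : Measure α}
  {Z : α → ℝ} {κ η D : ℝ}

theorem Invariant.ofReal_mul_measure_lt_le (hK : K.Invariant ν) [IsFiniteMeasure ν]
    (hZm : Measurable Z) (hdrift : ∀ x, κ ≤ Z x → ∫ y, Z y ∂K x - Z x ≤ -η)
    (hjump : ∀ x, K x {y | D < |Z y - Z x|} = 0) (hη : 0 ≤ η) (hD : 0 ≤ D) {a : ℝ}
    (ha : κ ≤ a + D) :
    ENNReal.ofReal η * ν {x | a + D < Z x}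
      ≤ ENNReal.ofReal D * ν {x | a - D < Z x ∧ Z x ≤ a + D} := by
  have hA (n : ℕ) : MeasurableSet {x | a + D < Z x ∧ Z x ≤ a + n} := hZm measurableSet_Ioc
  have hB : MeasurableSet {x | a - D < Z x ∧ Z x ≤ a + D} := hZm measurableSet_Ioc
  have htruncated (n : ℕ) : ENNReal.ofReal η * ν {x | a + D < Z x ∧ Z x ≤ a + n}
      ≤ ENNReal.ofReal D * ν {x | a - D < Z x ∧ Z x ≤ a + D} := by
    have hfin : ∫⁻ x, ENNReal.ofReal (min (Z x - a) n) ∂ν ≠ ∞ :=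
      ne_top_of_le_ne_top (by simp [MeasureTheory.lintegral_const, ENNReal.mul_eq_top])
        (lintegral_mono fun x => ENNReal.ofReal_le_ofReal (min_le_right _ (n : ℝ)))
    have h := hK.lintegral_le_of_forall_lintegral_add_le (by fun_prop) hfin
      (lintegral_truncation_add_indicator_le hZm hdrift hjump hη hD ha n)
    rwa [lintegral_indicator_const (hA n), lintegral_indicator_const hB] at h
  have hunion : {x | a + D < Z x} = ⋃ n : ℕ, {x | a + D < Z x ∧ Z x ≤ a + n} := by
    ext x
    simp only [Set.mem_ofPred_eq, Set.mem_iUnion]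
    refine ⟨fun h => ?_, fun ⟨_, h, _⟩ => h⟩
    obtain ⟨n, hn⟩ := exists_nat_ge (Z x - a)
    exact ⟨n, h, by linarith⟩
  have hmono : Monotone fun n : ℕ => {x | a + D < Z x ∧ Z x ≤ a + n} :=
    fun m n hmn x hx => ⟨hx.1, hx.2.trans (by gcongr)⟩
  rw [hunion, hmono.measure_iUnion, ENNReal.mul_iSup]
  exact iSup_le htruncated

theorem Invariant.measure_lt_le (hK : K.Invariant ν) [IsFiniteMeasure ν]
    (hZm : Measurable Z) (hdrift : ∀ x, κ ≤ Z x → ∫ y, Z y ∂K x - Z x ≤ -η)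
    (hjump : ∀ x, K x {y | D < |Z y - Z x|} = 0) (hη : 0 < η) (hD : 0 ≤ D) {a : ℝ}
    (ha : κ ≤ a + D) :
    ν {x | a + D < Z x} ≤ ENNReal.ofReal (D / (D + η)) * ν {x | a - D < Z x} := by
  have hsplit : ν {x | a - D < Z x}
      = ν {x | a + D < Z x} + ν {x | a - D < Z x ∧ Z x ≤ a + D} := by
    rw [← measure_union (s₁ := {x | a + D < Z x}) (s₂ := {x | a - D < Z x ∧ Z x ≤ a + D})
      (Set.disjoint_left.mpr fun x h1 h2 => by linarith [h2.2, h1.out]) (hZm measurableSet_Ioc)]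
    congr 1
    ext x
    simp only [Set.mem_ofPred_eq, Set.mem_union]
    constructor
    · intro h
      exact (lt_or_ge (a + D) (Z x)).imp id fun h' => ⟨h, h'⟩
    · rintro (h | h)
      · linarith
      · exact h.1
  have hpos : ENNReal.ofReal (D + η) ≠ 0 := (ENNReal.ofReal_pos.mpr (by linarith)).ne'
  refine (ENNReal.mul_le_mul_iff_right hpos ENNReal.ofReal_ne_top).mp ?_
  calc ENNReal.ofReal (D + η) * ν {x | a + D < Z x}
      = ENNReal.ofReal D * ν {x | a + D < Z x} + ENNReal.ofReal η * ν {x | a + D < Z x} := by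
        rw [ENNReal.ofReal_add hD hη.le, add_mul]
    _ ≤ ENNReal.ofReal D * ν {x | a + D < Z x}
          + ENNReal.ofReal D * ν {x | a - D < Z x ∧ Z x ≤ a + D} :=
        add_le_add_right (hK.ofReal_mul_measure_lt_le hZm hdrift hjump hη.le hD ha) _
    _ = ENNReal.ofReal (D + η) * (ENNReal.ofReal (D / (D + η)) * ν {x | a - D < Z x}) := by
        rw [← mul_add, ← hsplit, ← mul_assoc, ← ENNReal.ofReal_mul (by linarith),
          mul_div_cancel₀ _ (by linarith)]

theorem Invariant.measure_lt_le_geometric (hK : K.Invariant ν) [IsProbabilityMeasure ν]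
    (hZm : Measurable Z) (hdrift : ∀ x, κ ≤ Z x → ∫ y, Z y ∂K x - Z x ≤ -η)
    (hjump : ∀ x, K x {y | D < |Z y - Z x|} = 0) (hη : 0 < η) (hD : 0 ≤ D) (m : ℕ) :
    ν {x | κ + 2 * D * m < Z x} ≤ ENNReal.ofReal ((D / (D + η)) ^ (m + 1)) := by
  have hstep (a : ℝ) (ha : κ ≤ a + D) := hK.measure_lt_le hZm hdrift hjump hη hD ha
  induction m with
  | zero =>
    rw [show κ + 2 * D * ((0 : ℕ) : ℝ) = κ - D + D by push_cast; ring, zero_add, pow_one]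
    exact (hstep _ (by linarith)).trans (mul_le_of_le_one_right' prob_le_one)
  | succ m ih =>
    rw [show κ + 2 * D * ((m + 1 : ℕ) : ℝ) = κ + 2 * D * m + D + D by push_cast; ring,
      pow_succ', ENNReal.ofReal_mul (by positivity)]
    refine (hstep _ (by nlinarith [(m.cast_nonneg : (0 : ℝ) ≤ m)])).trans ?_
    rw [add_sub_cancel_right]
    exact mul_le_mul_right ih _

theorem Invariant.lintegral_ofReal_pow_le (hK : K.Invariant ν) [IsProbabilityMeasure ν]
    (hZm : Measurable Z) (hZ : ∀ x, 0 ≤ Z x) (hdrift : ∀ x, κ ≤ Z x → ∫ y, Z y ∂K x - Z x ≤ -η)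
    (hjump : ∀ x, K x {y | D < |Z y - Z x|} = 0) (hη : 0 < η) {r : ℕ} (hr : r ≠ 0) :
    ∫⁻ x, ENNReal.ofReal (Z x ^ r) ∂ν
      ≤ ENNReal.ofReal ((2 * κ) ^ r + (4 * D) ^ r * ((D + η) / η) ^ r * r !) := by
  by_cases hbig : ∃ x, κ ≤ Z x
  · obtain ⟨x, hx⟩ := hbig
    have hD : 0 < D := hη.trans_le (drift_le_jump hZm hdrift hjump hx)
    have hfactor : (r ! : ℝ) / (1 - D / (D + η)) ^ r = ((D + η) / η) ^ r * r ! := by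
      rw [one_sub_div (by positivity), add_sub_cancel_left, div_eq_mul_inv, ← inv_pow, inv_div,
        mul_comm]
    rw [mul_assoc, ← hfactor]
    exact lintegral_ofReal_pow_le_of_tail_le_geometric hZm hZ hD (by positivity)
      ((div_lt_one (by positivity)).mpr (by linarith))
      (hK.measure_lt_le_geometric hZm hdrift hjump hη hD.le) hr
  · push Not at hbig
    refine (lintegral_mono fun x => ENNReal.ofReal_le_ofReal ?_).trans_eq
      (by rw [MeasureTheory.lintegral_const, measure_univ, mul_one])
    obtain ⟨y, hy⟩ := (ae_abs_sub_le_of_measure_eq_zero (hjump x)).exists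
    have hD : 0 ≤ D := (abs_nonneg _).trans hy
    have hpow : Z x ^ r ≤ (2 * κ) ^ r :=
      pow_le_pow_left₀ (hZ x) (by linarith [hZ x, hbig x]) r
    have : 0 ≤ (4 * D) ^ r * ((D + η) / η) ^ r * r ! := by positivity
    linarith

end ProbabilityTheory.Kernel


/-- (Moment bounds from drift conditions, Lemma 3 of
Maguluri–Srikant.) Let `𝒳` be a countable (discrete) state space, `K` a Markov
kernel on `𝒳`, and `X : ℕ → Ω → 𝒳` a time-homogeneous Markov chain with
transition kernel `K`, expressed through conditional expectations of indicator
functions given the σ-algebra generated by the past. Let `Z : 𝒳 → [0,∞)`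
satisfy the drift conditions (C1) and (C2). If `X k` converges in distribution
(pointwise convergence of point masses, which is equivalent on a countable
discrete space) to `X̄`, then for every integer `r ≥ 1`,
`E[Z(X̄)^r] ≤ (2κ)^r + (4D)^r·((D+η)/η)^r·r!`. -/
theorem moment_bounds_from_drift
    {𝒳 : Type} [Countable 𝒳] [MeasurableSpace 𝒳] [MeasurableSingletonClass 𝒳]
    {Ω : Type} [MeasurableSpace Ω] (μ : Measure Ω) [IsProbabilityMeasure μ]
    (K : Kernel 𝒳 𝒳) [IsMarkovKernel K]
    (X : ℕ → Ω → 𝒳) (hX_meas : ∀ k, Measurable (X k))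
    (hMarkov : ∀ (k : ℕ) (y : 𝒳),
      (μ[(X (k + 1) ⁻¹' {y}).indicator (fun _ => (1 : ℝ)) |
          MeasurableSpace.comap (fun ω => fun i : Fin (k + 1) => X i ω)
            (by infer_instance)])
        =ᵐ[μ] fun ω => (K (X k ω) {y}).toReal)
    (Z : 𝒳 → ℝ) (hZ : ∀ x, 0 ≤ Z x)
    (η : ℝ) (hη : 0 < η) (κ : ℝ)
    (hC1 : ∀ x : 𝒳, κ ≤ Z x → (∫ y, Z y ∂(K x)) - Z x ≤ -η)
    (D : ℝ)
    (hC2 : ∀ x : 𝒳, K x {y | D < |Z y - Z x|} = 0)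
    {Ω' : Type} [MeasurableSpace Ω'] (μ' : Measure Ω') [IsProbabilityMeasure μ']
    (Xbar : Ω' → 𝒳) (hXbar_meas : Measurable Xbar)
    (hconv : ∀ x : 𝒳,
      Tendsto (fun k => (μ (X k ⁻¹' {x})).toReal) atTop
        (nhds ((μ' (Xbar ⁻¹' {x})).toReal)))
    (r : ℕ) (hr : 1 ≤ r) :
    ∫⁻ ω, ENNReal.ofReal ((Z (Xbar ω)) ^ r) ∂μ'
      ≤ ENNReal.ofReal
          ((2 * κ) ^ r + (4 * D) ^ r * ((D + η) / η) ^ r * (Nat.factorial r)) := by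
  have hZm : Measurable Z := measurable_of_countable Z
  have : IsProbabilityMeasure (μ'.map Xbar) :=
    Measure.isProbabilityMeasure_map hXbar_meas.aemeasurable
  have hlaw (k : ℕ) : μ.map (X (k + 1)) = K ∘ₘ μ.map (X k) :=
    Kernel.map_eq_comp_map_of_condExp_indicator_ae_eq
      (measurable_pi_lambda (fun ω (i : Fin (k + 1)) => X i ω) fun i => hX_meas i).comap_le
      (hX_meas k) (hX_meas (k + 1)) (hMarkov k)
  have hinv : K.Invariant (μ'.map Xbar) := by
    refine Kernel.invariant_of_tendsto_measure_singleton (p := fun k => μ.map (X k)) hlaw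
      fun x => ?_
    simp only [Measure.map_apply (hX_meas _) (measurableSet_singleton x),
      Measure.map_apply hXbar_meas (measurableSet_singleton x)]
    exact (ENNReal.tendsto_toReal_iff (fun k => measure_ne_top _ _) (measure_ne_top _ _)).mp
      (hconv x)
  rw [← lintegral_map (f := fun x => ENNReal.ofReal (Z x ^ r)) (measurable_of_countable _)
    hXbar_meas]
  exact hinv.lintegral_ofReal_pow_le hZm hZ hC1 hC2 hη (by omega)
end

section
/- Assume E[Σ_{i=1}^N q̄_i] < ∞. Then for every integer r ≥ 1, E[(Σ_{i=1}^N ū_i)^r] ≤ smax^(r−1)·N^(r−α). -/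
open MeasureTheory ProbabilityTheory Filter

/-!
Summing `q̄⁺ = q̄ + ã - s̄ + ū` over the queues and taking expectations, stationarity cancels the
queue lengths (this is where `E[Σ q̄ᵢ] < ∞` enters), so `E[Σ ūᵢ] = E[Σ s̄ᵢ] - E[ā] = N·N^(-α)`.
Since `0 ≤ Σ ūᵢ ≤ N·smax`, `E[(Σ ūᵢ)^r] ≤ (N·smax)^(r-1)·E[Σ ūᵢ]`.
-/

theorem Nat.cast_tsub_eq_sub_add_cast_tsub {R : Type*} [AddCommGroupWithOne R] (x y : ℕ) :
    ((x - y : ℕ) : R) = x - y + ((y - x : ℕ) : R) := by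
  have h : x - y + y = y - x + x := by omega
  have := congrArg (Nat.cast : ℕ → R) h
  push_cast at this
  rw [eq_sub_of_add_eq this]
  abel

theorem MeasureTheory.integral_pow_le_pow_pred_mul_integral {Ω : Type*} [MeasurableSpace Ω]
    {μ : Measure Ω} [IsFiniteMeasure μ] {f : Ω → ℝ} {C : ℝ} (hf : AEStronglyMeasurable f μ)
    (hf0 : 0 ≤ᵐ[μ] f) (hfC : ∀ᵐ ω ∂μ, f ω ≤ C) {r : ℕ} (hr : 1 ≤ r) :
    ∫ ω, f ω ^ r ∂μ ≤ C ^ (r - 1) * ∫ ω, f ω ∂μ := by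
  have hfint : Integrable f μ := Integrable.of_bound hf C <| by
    filter_upwards [hf0, hfC] with ω h0 hC
    rwa [Real.norm_of_nonneg h0]
  rw [← integral_const_mul]
  refine integral_mono_of_nonneg (hf0.mono fun ω h => pow_nonneg h r) (hfint.const_mul _) ?_
  filter_upwards [hf0, hfC] with ω h0 hC
  calc f ω ^ r = f ω ^ (r - 1) * f ω := (pow_sub_one_mul (by omega) _).symm
    _ ≤ C ^ (r - 1) * f ω := by gcongr

namespace JSQModel

variable {N : ℕ} {α amax smax σa2 σs2 : ℝ} {Ω : Type} [MeasurableSpace Ω] {μ : Measure Ω}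
  (M : JSQModel N α amax smax σa2 σs2 Ω μ)

theorem measurable_atilde (i : Fin N) : Measurable fun ω => M.atilde ω i :=
  Measurable.ite (M.meas_I (measurableSet_singleton i) |>.congr (by ext; simp [eq_comm]))
    M.meas_a measurable_const

theorem measurable_u (i : Fin N) : Measurable fun ω => M.u ω i :=
  ((measurable_pi_apply i).comp M.meas_s).sub
    (((measurable_pi_apply i).comp M.meas_q).add (M.measurable_atilde i))

theorem sum_atilde (ω : Ω) : ∑ i, M.atilde ω i = M.a ω := by
  simp [atilde]

theorem qplus_eq (ω : Ω) (i : Fin N) :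
    (M.qplus ω i : ℝ) = M.q ω i + M.atilde ω i - M.s ω i + M.u ω i := by
  rw [qplus, u, Nat.cast_tsub_eq_sub_add_cast_tsub, Nat.cast_add]

theorem sum_qplus_eq (ω : Ω) :
    ∑ i, (M.qplus ω i : ℝ) =
      ∑ i, (M.q ω i : ℝ) + M.a ω - ∑ i, (M.s ω i : ℝ) + ∑ i, (M.u ω i : ℝ) := by
  simp only [M.qplus_eq, Finset.sum_add_distrib, Finset.sum_sub_distrib, ← Nat.cast_sum,
    M.sum_atilde]

theorem u_le_smax (i : Fin N) : ∀ᵐ ω ∂μ, (M.u ω i : ℝ) ≤ smax := by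
  filter_upwards [M.s_bdd i] with ω h
  exact le_trans (mod_cast Nat.sub_le _ _) h

theorem sum_u_le : ∀ᵐ ω ∂μ, ∑ i, (M.u ω i : ℝ) ≤ N * smax := by
  filter_upwards [ae_all_iff.2 M.u_le_smax] with ω h
  calc ∑ i, (M.u ω i : ℝ) ≤ ∑ _i : Fin N, smax := Finset.sum_le_sum fun i _ => h i
    _ = N * smax := by simp

theorem integrable_a : Integrable (fun ω => (M.a ω : ℝ)) μ := by
  have := M.hprob
  refine Integrable.of_bound (measurable_from_top.comp M.meas_a).aestronglyMeasurable amax ?_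
  filter_upwards [M.a_bdd] with ω h
  simpa using h

theorem integrable_s (i : Fin N) : Integrable (fun ω => (M.s ω i : ℝ)) μ := by
  have := M.hprob
  refine Integrable.of_bound
    (measurable_from_top.comp ((measurable_pi_apply i).comp M.meas_s)).aestronglyMeasurable smax ?_
  filter_upwards [M.s_bdd i] with ω h
  simpa using h

theorem integral_sum_s : ∫ ω, ∑ i, (M.s ω i : ℝ) ∂μ = N := by
  simp [integral_finsetSum _ fun i _ => M.integrable_s i, M.s_mean]

theorem identDistrib_sum_qplus_sum_q :
    IdentDistrib (fun ω => ∑ i, (M.qplus ω i : ℝ)) (fun ω => ∑ i, (M.q ω i : ℝ)) μ μ :=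
  M.stationary.comp (u := fun v : Fin N → ℕ => ∑ i, (v i : ℝ)) (by fun_prop)

theorem integral_sum_u (hint : Integrable (fun ω => ∑ i, (M.q ω i : ℝ)) μ) :
    ∫ ω, ∑ i, (M.u ω i : ℝ) ∂μ = N * (N : ℝ) ^ (-α) := by
  have hqplus := M.identDistrib_sum_qplus_sum_q
  have hs : Integrable (fun ω => ∑ i, (M.s ω i : ℝ)) μ :=
    integrable_finsetSum _ fun i _ => M.integrable_s i
  have hu : (fun ω => ∑ i, (M.u ω i : ℝ)) = fun ω =>
      ∑ i, (M.qplus ω i : ℝ) - ∑ i, (M.q ω i : ℝ) - M.a ω + ∑ i, (M.s ω i : ℝ) := by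
    ext ω
    rw [M.sum_qplus_eq]
    ring
  have hdiff : Integrable (fun ω => ∑ i, (M.qplus ω i : ℝ) - ∑ i, (M.q ω i : ℝ)) μ :=
    (hqplus.integrable_iff.2 hint).sub hint
  have hdiff' : Integrable (fun ω =>
      ∑ i, (M.qplus ω i : ℝ) - ∑ i, (M.q ω i : ℝ) - M.a ω) μ := hdiff.sub M.integrable_a
  rw [hu, integral_add hdiff' hs, integral_sub hdiff M.integrable_a,
    integral_sub (hqplus.integrable_iff.2 hint) hint, hqplus.integral_eq, M.a_mean,
    M.integral_sum_s]
  ring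

end JSQModel

/-- Assume `E[Σᵢ q̄ᵢ] < ∞`. Then for every integer `r ≥ 1`,
`E[(Σᵢ ūᵢ)^r] ≤ smax^(r−1)·N^(r−α)`. -/
theorem moment_bound_total_unused_service
    (N : ℕ) (hN : 2 ≤ N) (α amax smax σa2 σs2 : ℝ)
    {Ω : Type} [MeasurableSpace Ω] {μ : Measure Ω}
    (M : JSQModel N α amax smax σa2 σs2 Ω μ)
    (hint : Integrable (fun ω => ∑ i, (M.q ω i : ℝ)) μ)
    (r : ℕ) (hr : 1 ≤ r) :
    ∫ ω, (∑ i, (M.u ω i : ℝ)) ^ r ∂μ ≤ smax ^ (r - 1) * (N : ℝ) ^ ((r : ℝ) - α) := by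
  have := M.hprob
  have hN0 : (0 : ℝ) < N := by exact_mod_cast (by omega : 0 < N)
  have hmeas : Measurable fun ω => ∑ i, (M.u ω i : ℝ) :=
    Finset.measurable_sum _ fun i _ => measurable_from_top.comp (M.measurable_u i)
  calc ∫ ω, (∑ i, (M.u ω i : ℝ)) ^ r ∂μ
      ≤ (N * smax) ^ (r - 1) * ∫ ω, ∑ i, (M.u ω i : ℝ) ∂μ :=
        integral_pow_le_pow_pred_mul_integral hmeas.aestronglyMeasurable
          (ae_of_all _ fun ω => by positivity) M.sum_u_le hr
    _ = smax ^ (r - 1) * (N : ℝ) ^ ((r : ℝ) - α) := by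
        rw [M.integral_sum_u hint, sub_eq_add_neg, Real.rpow_add hN0, Real.rpow_natCast,
          ← pow_sub_one_mul (by omega : r ≠ 0)]
        ring
end
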